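/- arXiv:2108.12679 — 8 statements merged into one kernel-verified Lean document; each statement's English description precedes it below -/
import Mathlib

section
/- Let (Λ_0, Λ_1, ..., Λ_l) be a tuple of Laurent polynomials over ℤ_p, and define W_s(x) = Λ_0(x)·Λ_1(x)^p···Λ_s(x)^(p^s) and W_s^(j)(x) = Λ_j(x)·Λ_{j+1}(x)^p···Λ_s(x)^(p^(s-j)). Define the ghost polynomials V_s recursively by V_s(x) = W_s(x) - Σ_{j=1}^{s} V_{j-1}(x)·W_s^(j)(x^(p^j)). Then for each 0 ≤ s ≤ l, all coefficients of V_s are divisible by p^s. -/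
open AddMonoidAlgebra

/-- Laurent polynomials in variables indexed by `σ` with coefficients in `R`. -/
abbrev MvLaurent (R : Type*) [CommRing R] (σ : Type*) : Type _ :=
  AddMonoidAlgebra R (σ →₀ ℤ)

/-- The substitution `x ↦ x^q` on Laurent polynomials (scaling all exponents by `q`). -/
noncomputable def frobSubst (R : Type*) [CommRing R] (σ : Type*) (q : ℕ) :
    MvLaurent R σ →+* MvLaurent R σ :=
  AddMonoidAlgebra.mapDomainRingHom R
    (DistribMulAction.toAddMonoidHom (σ →₀ ℤ) (q : ℤ))

/-- `Wseg p Λ j s = Λ_j · Λ_{j+1}^p ··· Λ_s^(p^(s-j))` (for `j ≤ s`);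
in particular `Wseg p Λ 0 s = W_s = Λ_0 · Λ_1^p ··· Λ_s^(p^s)`. -/
noncomputable def Wseg {R : Type*} [CommRing R] {σ : Type*} (p : ℕ)
    (Λ : ℕ → MvLaurent R σ) (j s : ℕ) : MvLaurent R σ :=
  ∏ i ∈ Finset.range (s - j + 1), Λ (j + i) ^ p ^ i

/-!
Write `A = Λ_{n+1}^{p^{n+1}}`. Subtracting `A` times the recursion for `V_n` from the recursion
for `V_{n+1}` gives
`V_{n+1} = V_n (A - Λ_{n+1}(x^{p^{n+1}})) + Σ_{j=1}^n V_{j-1} W_n^(j)(x^{p^j}) (A - Λ_{n+1}(x^{p^j})^{p^{n+1-j}})`.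
Since `f(x^{p^j}) ≡ f^{p^j} mod p` for Laurent polynomials over `ℤ_p`, the `j`-th bracket is
divisible by `p^{n+2-j}` (raising a congruence mod `p` to the power `p^k` improves it to
mod `p^{k+1}`), and induction on `n` finishes.
-/

section

variable {A : Type*} [CommRing A] {p : ℕ}

lemma natCast_dvd_map_add_sub_add_pow (hp : p.Prime) (ψ : A →+* A)
    {x y : A} (hx : (p : A) ∣ ψ x - x ^ p) (hy : (p : A) ∣ ψ y - y ^ p) :
    (p : A) ∣ ψ (x + y) - (x + y) ^ p := by
  obtain ⟨r, hr⟩ := exists_add_pow_prime_eq hp x y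
  rw [map_add, hr, show ψ x + ψ y - (x ^ p + y ^ p + p * x * y * r) =
    (ψ x - x ^ p) + (ψ y - y ^ p) - p * (x * y * r) by ring]
  exact dvd_sub (dvd_add hx hy) (dvd_mul_right _ _)

lemma natCast_pow_dvd_pow_sub_pow {a b : A} {j : ℕ}
    (h : (p : A) ∣ a - b ^ p ^ j) (k : ℕ) : (p : A) ^ (k + 1) ∣ b ^ p ^ (j + k) - a ^ p ^ k := by
  rw [pow_add p j k, pow_mul]
  exact dvd_sub_comm.mp (dvd_sub_pow_of_dvd_sub h k)

end

lemma PadicInt.natCast_dvd_pow_sub_self (p : ℕ) [Fact p.Prime] (b : ℤ_[p]) :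
    (p : ℤ_[p]) ∣ b ^ p - b := by
  rw [← Ideal.mem_span_singleton, ← PadicInt.maximalIdeal_eq_span_p,
    ← PadicInt.ker_toZMod, RingHom.mem_ker, map_sub, map_pow, ZMod.pow_card, sub_self]

section frobSubst

variable {R : Type*} [CommRing R] {σ : Type*}

lemma frobSubst_single (q : ℕ) (a : σ →₀ ℤ) (b : R) :
    frobSubst R σ q (single a b) = single ((q : ℤ) • a) b :=
  mapDomain_single

lemma frobSubst_one : frobSubst R σ 1 = RingHom.id _ := by
  rw [frobSubst, Nat.cast_one, ← mapDomainRingHom_id]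
  exact congrArg _ (AddMonoidHom.ext (one_smul ℤ))

lemma frobSubst_mul (q r : ℕ) :
    frobSubst R σ (q * r) = (frobSubst R σ q).comp (frobSubst R σ r) := by
  rw [frobSubst, frobSubst, frobSubst, ← mapDomainRingHom_comp]
  exact congrArg _ (AddMonoidHom.ext fun e => by simp [mul_smul])

lemma natCast_dvd_coeff {n : ℕ} {f : MvLaurent R σ} (h : (n : MvLaurent R σ) ∣ f)
    (e : σ →₀ ℤ) : (n : R) ∣ f.coeff e := by
  obtain ⟨g, rfl⟩ := h
  rw [natCast_def, coeff_single_zero_mul]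
  exact dvd_mul_right _ _

variable {p : ℕ}

lemma natCast_dvd_frobSubst_sub_pow (hp : p.Prime) (hR : ∀ b : R, (p : R) ∣ b ^ p - b)
    (f : MvLaurent R σ) : (p : MvLaurent R σ) ∣ frobSubst R σ p f - f ^ p := by
  induction f using AddMonoidAlgebra.induction with
  | zero => simp [zero_pow hp.ne_zero]
  | single_add a b g _ _ ih =>
    refine natCast_dvd_map_add_sub_add_pow hp _ ?_ ih
    obtain ⟨c, hc⟩ := hR b
    refine ⟨-single ((p : ℤ) • a) c, ?_⟩
    rw [frobSubst_single, single_pow, natCast_zsmul, ← single_sub, natCast_def, mul_neg,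
      single_mul_single, zero_add, ← hc, ← single_neg, neg_sub]

lemma natCast_dvd_frobSubst_pow_sub_pow (hp : p.Prime) (hR : ∀ b : R, (p : R) ∣ b ^ p - b)
    (j : ℕ) (f : MvLaurent R σ) :
    (p : MvLaurent R σ) ∣ frobSubst R σ (p ^ j) f - f ^ p ^ j := by
  induction j with
  | zero => simp [frobSubst_one]
  | succ j ih =>
    set g := frobSubst R σ (p ^ j) f
    have hpow : (p : MvLaurent R σ) ∣ g ^ p - (f ^ p ^ j) ^ p :=
      ih.trans (sub_dvd_pow_sub_pow _ _ p)
    rw [pow_succ', frobSubst_mul, RingHom.comp_apply, pow_mul',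
      ← sub_add_sub_cancel _ (g ^ p)]
    exact dvd_add (natCast_dvd_frobSubst_sub_pow hp hR g) hpow

end frobSubst

section Ghost

variable {R : Type*} [CommRing R] {σ : Type*} {p : ℕ}

lemma Wseg_self (Λ : ℕ → MvLaurent R σ) (s : ℕ) : Wseg p Λ s s = Λ s := by
  simp [Wseg]

lemma Wseg_succ_right (Λ : ℕ → MvLaurent R σ) {j n : ℕ} (hj : j ≤ n) :
    Wseg p Λ j (n + 1) = Wseg p Λ j n * Λ (n + 1) ^ p ^ (n + 1 - j) := by
  rw [Wseg, Wseg, show n + 1 - j + 1 = n - j + 1 + 1 by omega, Finset.prod_range_succ,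
    show j + (n - j + 1) = n + 1 by omega, show n - j + 1 = n + 1 - j by omega]

/-- The ghost recursion, with an arbitrary ring endomorphism `φ j` in place of `x ↦ x ^ p ^ j`. -/
def GhostRecursion (p : ℕ) (φ : ℕ → MvLaurent R σ →+* MvLaurent R σ)
    (Λ V : ℕ → MvLaurent R σ) (s : ℕ) : Prop :=
  V s = Wseg p Λ 0 s - ∑ j ∈ Finset.Icc 1 s, V (j - 1) * φ j (Wseg p Λ j s)

variable {φ : ℕ → MvLaurent R σ →+* MvLaurent R σ} {Λ V : ℕ → MvLaurent R σ}

lemma GhostRecursion.succ_eq {n : ℕ} (hn : GhostRecursion p φ Λ V n)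
    (hn₁ : GhostRecursion p φ Λ V (n + 1)) :
    V (n + 1) = V n * (Λ (n + 1) ^ p ^ (n + 1) - φ (n + 1) (Λ (n + 1))) +
      ∑ j ∈ Finset.Icc 1 n, V (j - 1) * φ j (Wseg p Λ j n) *
        (Λ (n + 1) ^ p ^ (n + 1) - φ j (Λ (n + 1)) ^ p ^ (n + 1 - j)) := by
  have hsum : ∑ j ∈ Finset.Icc 1 n, V (j - 1) * φ j (Wseg p Λ j (n + 1)) =
      ∑ j ∈ Finset.Icc 1 n, V (j - 1) * φ j (Wseg p Λ j n) * φ j (Λ (n + 1)) ^ p ^ (n + 1 - j) :=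
    Finset.sum_congr rfl fun j hj => by
      rw [Wseg_succ_right Λ (Finset.mem_Icc.mp hj).2, map_mul, map_pow, mul_assoc]
  have hW : Wseg p Λ 0 n = V n + ∑ j ∈ Finset.Icc 1 n, V (j - 1) * φ j (Wseg p Λ j n) := by
    rw [hn]; ring
  rw [hn₁, Finset.sum_Icc_succ_top (by omega), hsum, Wseg_succ_right Λ (Nat.zero_le n), hW,
    Wseg_self, Nat.add_sub_cancel, Nat.sub_zero]
  simp only [add_mul, mul_sub, Finset.sum_mul, Finset.sum_sub_distrib]
  ring

theorem GhostRecursion.natCast_pow_dvd (hφ : ∀ j f, (p : MvLaurent R σ) ∣ φ j f - f ^ p ^ j)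
    {l : ℕ} (hV : ∀ s ≤ l, GhostRecursion p φ Λ V s) :
    ∀ s ≤ l, (p : MvLaurent R σ) ^ s ∣ V s := by
  intro s
  induction s using Nat.strong_induction_on with
  | _ s ih =>
    intro hs
    rcases s with _ | n
    · simp
    rw [(hV n (by omega)).succ_eq (hV (n + 1) hs)]
    refine dvd_add ?_ (Finset.dvd_sum fun j hj => ?_)
    · rw [pow_succ]
      exact mul_dvd_mul (ih n (by omega) (by omega)) (dvd_sub_comm.mp (hφ _ _))
    · obtain ⟨hj₁, hjn⟩ := Finset.mem_Icc.mp hj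
      have hcong := natCast_pow_dvd_pow_sub_pow (hφ j (Λ (n + 1))) (n + 1 - j)
      rw [show j + (n + 1 - j) = n + 1 by omega] at hcong
      have hsplit : (p : MvLaurent R σ) ^ (n + 1) = p ^ (j - 1) * p ^ (n + 1 - j + 1) := by
        rw [← pow_add]; congr 1; omega
      rw [hsplit]
      exact mul_dvd_mul ((ih (j - 1) (by omega) (by omega)).mul_right _) hcong

end Ghost

theorem ghost_coefficients_divisible_general (p : ℕ) [Fact p.Prime]
    (σ : Type*) (l : ℕ) (Λ V : ℕ → MvLaurent ℤ_[p] σ)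
    (hV : ∀ s ≤ l, V s =
      Wseg p Λ 0 s -
        ∑ j ∈ Finset.Icc 1 s,
          V (j - 1) * frobSubst ℤ_[p] σ (p ^ j) (Wseg p Λ j s)) :
    ∀ s ≤ l, ∀ e : σ →₀ ℤ, (p : ℤ_[p]) ^ s ∣ (V s).coeff e := by
  intro s hs e
  have hφ : ∀ j f, (p : MvLaurent ℤ_[p] σ) ∣ frobSubst ℤ_[p] σ (p ^ j) f - f ^ p ^ j :=
    natCast_dvd_frobSubst_pow_sub_pow Fact.out (PadicInt.natCast_dvd_pow_sub_self p)
  have hdvd := GhostRecursion.natCast_pow_dvd hφ hV s hs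
  rw [← Nat.cast_pow] at hdvd ⊢
  exact natCast_dvd_coeff hdvd e

/-- if `V` satisfies the ghost recursion
`V_s = W_s - Σ_{j=1}^s V_{j-1}(x) · W_s^(j)(x^{p^j})` for all `s ≤ l`, then every
coefficient of `V_s` is divisible by `p^s` for `0 ≤ s ≤ l`. -/
theorem ghost_coefficients_divisible (p : ℕ) (hp : p.Prime) [Fact p.Prime]
    (σ : Type*) (l : ℕ) (Λ V : ℕ → MvLaurent ℤ_[p] σ)
    (hV : ∀ s ≤ l, V s =
      Wseg p Λ 0 s -
        ∑ j ∈ Finset.Icc 1 s,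
          V (j - 1) * frobSubst ℤ_[p] σ (p ^ j) (Wseg p Λ j s)) :
    ∀ s ≤ l, ∀ e : σ →₀ ℤ, (p : ℤ_[p]) ^ s ∣ (V s).coeff e :=
  ghost_coefficients_divisible_general p σ l Λ V hV
end

section
/- With notation as in the ghost construction, the Newton polytope (with respect to the t-variables) of the ghost polynomial V_s is contained in the Minkowski sum N(Λ_0) + p·N(Λ_1) + ... + p^s·N(Λ_s). -/
/-!
Read the exponents through an additive map `φ` into a real vector space (here: the projection
to the `t`-exponents). Newton polytopes are then subadditive under products,
`N(FG) ⊆ N(F) + N(G)`, and, being convex, satisfy `N(F^k) ⊆ k • N(F)`; the substitution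
`x ↦ x^q` scales them by `q`. Hence `N(W_s^{(j)}(x^{p^j})) ⊆ Σ_{i=j}^{s} p^i N(Λ_i)`, and by
strong induction on `s` each term `V_{j-1} · W_s^{(j)}(x^{p^j})` of the recursion has Newton
polytope in `Σ_{i<j} p^i N(Λ_i) + Σ_{i=j}^{s} p^i N(Λ_i)`, the convex target polytope. A convex
set containing `N(F)` and `N(G)` contains `N(F - G)` and likewise for finite sums, which closes
the induction.
-/

open AddMonoidAlgebra Pointwise

/-- The Newton polytope of a Laurent polynomial in the variables `(t, z)`
(`t`-variables indexed by `Fin r`, `z`-variables by `Fin nz`) with respect to the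
`t`-variables only: the convex hull in `ℝ^r` of the `t`-parts of the exponents in
the support. -/
noncomputable def newtonT {R : Type*} [CommRing R] {r nz : ℕ}
    (F : MvLaurent R (Fin r ⊕ Fin nz)) : Set (Fin r → ℝ) :=
  convexHull ℝ ((fun e : (Fin r ⊕ Fin nz) →₀ ℤ => fun i : Fin r => (e (Sum.inl i) : ℝ)) ''
    ↑F.coeff.support)

noncomputable def newtonPolytope {R M E : Type*} [Semiring R] [AddZeroClass M] [AddCommGroup E]
    [Module ℝ E] (φ : M →+ E) (F : AddMonoidAlgebra R M) : Set E :=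
  convexHull ℝ (φ '' F.coeff.support)

section NewtonPolytope

variable {R M E : Type*} [AddCommGroup E] [Module ℝ E]

section AddZeroClass

variable [Semiring R] [AddZeroClass M] {φ : M →+ E} {F G : AddMonoidAlgebra R M} {C : Set E}

lemma convex_newtonPolytope (φ : M →+ E) (F : AddMonoidAlgebra R M) :
    Convex ℝ (newtonPolytope φ F) :=
  convex_convexHull ℝ _

lemma map_mem_newtonPolytope {e : M} (he : e ∈ F.coeff.support) : φ e ∈ newtonPolytope φ F :=
  subset_convexHull ℝ _ ⟨e, he, rfl⟩

lemma newtonPolytope_subset_of_map_mem (hC : Convex ℝ C)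
    (h : ∀ e ∈ F.coeff.support, φ e ∈ C) :
    newtonPolytope φ F ⊆ C :=
  convexHull_min (Set.image_subset_iff.mpr h) hC

lemma newtonPolytope_sum_subset {ι : Type*} {s : Finset ι} {G : ι → AddMonoidAlgebra R M}
    (hC : Convex ℝ C) (h : ∀ j ∈ s, newtonPolytope φ (G j) ⊆ C) :
    newtonPolytope φ (∑ j ∈ s, G j) ⊆ C := by
  classical
  refine newtonPolytope_subset_of_map_mem hC fun e he ↦ ?_
  rw [coeff_sum] at he
  obtain ⟨j, hj, hje⟩ := Finset.mem_biUnion.mp (Finsupp.support_finsetSum he)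
  exact h j hj (map_mem_newtonPolytope hje)

lemma newtonPolytope_mul_subset (φ : M →+ E) (F G : AddMonoidAlgebra R M) :
    newtonPolytope φ (F * G) ⊆ newtonPolytope φ F + newtonPolytope φ G := by
  classical
  rw [newtonPolytope, newtonPolytope, newtonPolytope, ← convexHull_add, ← Set.image_add,
    ← Finset.coe_add]
  exact convexHull_mono (Set.image_mono (support_coeff_mul_subset F G))

lemma newtonPolytope_one_subset (φ : M →+ E) :
    newtonPolytope φ (1 : AddMonoidAlgebra R M) ⊆ 0 :=
  newtonPolytope_subset_of_map_mem (convex_singleton 0) fun e he ↦ by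
    rw [Finset.mem_singleton.mp (Finsupp.support_single_subset he), map_zero]
    rfl

end AddZeroClass

lemma newtonPolytope_sub_subset [Ring R] [AddZeroClass M] {φ : M →+ E}
    {F G : AddMonoidAlgebra R M} {C : Set E} (hC : Convex ℝ C) (hF : newtonPolytope φ F ⊆ C)
    (hG : newtonPolytope φ G ⊆ C) : newtonPolytope φ (F - G) ⊆ C := by
  classical
  refine newtonPolytope_subset_of_map_mem hC fun e he ↦ ?_
  rcases Finset.mem_union.mp (Finsupp.support_sub he) with h | h
  · exact hF (map_mem_newtonPolytope h)
  · exact hG (map_mem_newtonPolytope h)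

lemma newtonPolytope_pow_subset [Semiring R] [AddMonoid M] (φ : M →+ E)
    (F : AddMonoidAlgebra R M) {k : ℕ} (hk : k ≠ 0) :
    newtonPolytope φ (F ^ k) ⊆ (k : ℝ) • newtonPolytope φ F := by
  induction k, Nat.one_le_iff_ne_zero.mpr hk using Nat.le_induction with
  | base => simp
  | succ k hk ih =>
    calc newtonPolytope φ (F ^ (k + 1))
        ⊆ newtonPolytope φ (F ^ k) + newtonPolytope φ F := by
          rw [pow_succ]; exact newtonPolytope_mul_subset φ _ F
      _ ⊆ (k : ℝ) • newtonPolytope φ F + (1 : ℝ) • newtonPolytope φ F := by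
        rw [one_smul]; exact Set.add_subset_add_right (ih (by omega))
      _ = ((k + 1 : ℕ) : ℝ) • newtonPolytope φ F := by
        rw [← (convex_newtonPolytope φ F).add_smul k.cast_nonneg zero_le_one, Nat.cast_succ]

lemma newtonPolytope_prod_subset [CommSemiring R] [AddCommMonoid M] (φ : M →+ E) {ι : Type*}
    (s : Finset ι) (F : ι → AddMonoidAlgebra R M) :
    newtonPolytope φ (∏ i ∈ s, F i) ⊆ ∑ i ∈ s, newtonPolytope φ (F i) := by
  classical
  induction s using Finset.induction_on with
  | empty => simpa using newtonPolytope_one_subset φ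
  | insert a s ha ih =>
    rw [Finset.prod_insert ha, Finset.sum_insert ha]
    exact (newtonPolytope_mul_subset _ _ _).trans (Set.add_subset_add_left ih)

lemma newtonPolytope_frobSubst_subset [CommRing R] {σ : Type*} (φ : (σ →₀ ℤ) →+ E)
    (q : ℕ) (F : MvLaurent R σ) :
    newtonPolytope φ (frobSubst R σ q F) ⊆ (q : ℝ) • newtonPolytope φ F := by
  classical
  refine newtonPolytope_subset_of_map_mem ((convex_newtonPolytope φ F).smul _) fun e he ↦ ?_
  obtain ⟨a, ha, rfl⟩ := Finset.mem_image.mp (Finsupp.mapDomain_support he)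
  have hφ : φ ((q : ℤ) • a) = (q : ℝ) • φ a := by
    rw [map_zsmul, natCast_zsmul, Nat.cast_smul_eq_nsmul]
  rw [DistribMulAction.toAddMonoidHom_apply, hφ]
  exact Set.smul_mem_smul_set (map_mem_newtonPolytope ha)

end NewtonPolytope

noncomputable def tExponent (r nz : ℕ) : ((Fin r ⊕ Fin nz) →₀ ℤ) →+ (Fin r → ℝ) :=
  AddMonoidHom.pi fun i ↦ (Int.castAddHom ℝ).comp (Finsupp.applyAddHom (Sum.inl i))

lemma newtonT_eq_newtonPolytope {R : Type*} [CommRing R] {r nz : ℕ}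
    (F : MvLaurent R (Fin r ⊕ Fin nz)) : newtonT F = newtonPolytope (tExponent r nz) F :=
  rfl

section Ghost

variable {R : Type*} [CommRing R] {σ E : Type*} [AddCommGroup E] [Module ℝ E]
  {p : ℕ} (hp : p ≠ 0) (φ : (σ →₀ ℤ) →+ E) (Λ : ℕ → MvLaurent R σ)
include hp

lemma newtonPolytope_Wseg_subset (j s : ℕ) :
    newtonPolytope φ (Wseg p Λ j s) ⊆
      ∑ i ∈ Finset.range (s - j + 1), ((p : ℝ) ^ i) • newtonPolytope φ (Λ (j + i)) := by
  refine (newtonPolytope_prod_subset φ _ _).trans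
    (Set.finsetSum_subset_finsetSum _ _ _ fun i _ ↦ ?_)
  simpa using newtonPolytope_pow_subset φ (Λ (j + i)) (pow_ne_zero i hp)

lemma newtonPolytope_frobSubst_Wseg_subset {j s : ℕ} (hjs : j ≤ s) :
    newtonPolytope φ (frobSubst R σ (p ^ j) (Wseg p Λ j s)) ⊆
      ∑ i ∈ Finset.Ico j (s + 1), ((p : ℝ) ^ i) • newtonPolytope φ (Λ i) := by
  calc newtonPolytope φ (frobSubst R σ (p ^ j) (Wseg p Λ j s))
      ⊆ ((p : ℝ) ^ j) • newtonPolytope φ (Wseg p Λ j s) := by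
        simpa using newtonPolytope_frobSubst_subset φ (p ^ j) (Wseg p Λ j s)
    _ ⊆ ∑ i ∈ Finset.range (s - j + 1),
          ((p : ℝ) ^ (j + i)) • newtonPolytope φ (Λ (j + i)) := by
        grw [newtonPolytope_Wseg_subset hp φ Λ j s, Finset.smul_sum]
        simp only [smul_smul, pow_add, subset_refl]
    _ = ∑ i ∈ Finset.Ico j (s + 1), ((p : ℝ) ^ i) • newtonPolytope φ (Λ i) := by
        rw [Finset.sum_Ico_eq_sum_range, Nat.sub_add_comm hjs]

theorem newtonPolytope_ghost_subset {l : ℕ} {V : ℕ → MvLaurent R σ}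
    (hV : ∀ s ≤ l, V s = Wseg p Λ 0 s -
      ∑ j ∈ Finset.Icc 1 s, V (j - 1) * frobSubst R σ (p ^ j) (Wseg p Λ j s)) :
    ∀ s ≤ l, newtonPolytope φ (V s) ⊆
      ∑ i ∈ Finset.range (s + 1), ((p : ℝ) ^ i) • newtonPolytope φ (Λ i) := by
  intro s hs
  induction s using Nat.strong_induction_on with
  | _ s ih =>
    have hconv :
        Convex ℝ (∑ i ∈ Finset.range (s + 1), ((p : ℝ) ^ i) • newtonPolytope φ (Λ i)) :=
      convex_sum _ fun i _ ↦ (convex_newtonPolytope φ _).smul _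
    rw [hV s hs]
    refine newtonPolytope_sub_subset hconv (by simpa using newtonPolytope_Wseg_subset hp φ Λ 0 s)
      (newtonPolytope_sum_subset hconv fun j hj ↦ ?_)
    obtain ⟨hj1, hjs⟩ := Finset.mem_Icc.mp hj
    calc newtonPolytope φ (V (j - 1) * frobSubst R σ (p ^ j) (Wseg p Λ j s))
        ⊆ (∑ i ∈ Finset.range j, ((p : ℝ) ^ i) • newtonPolytope φ (Λ i)) +
            ∑ i ∈ Finset.Ico j (s + 1), ((p : ℝ) ^ i) • newtonPolytope φ (Λ i) := by
          grw [newtonPolytope_mul_subset, ih (j - 1) (by omega) (by omega), Nat.sub_add_cancel hj1,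
            newtonPolytope_frobSubst_Wseg_subset hp φ Λ hjs]
      _ = ∑ i ∈ Finset.range (s + 1), ((p : ℝ) ^ i) • newtonPolytope φ (Λ i) :=
          Finset.sum_range_add_sum_Ico _ (by omega)

end Ghost

theorem ghost_newton_polytope_general (p : ℕ) [Fact p.Prime]
    (r nz : ℕ) (l : ℕ) (Λ V : ℕ → MvLaurent ℤ_[p] (Fin r ⊕ Fin nz))
    (hV : ∀ s ≤ l, V s =
      Wseg p Λ 0 s -
        ∑ j ∈ Finset.Icc 1 s,
          V (j - 1) * frobSubst ℤ_[p] (Fin r ⊕ Fin nz) (p ^ j) (Wseg p Λ j s)) :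
    ∀ s ≤ l,
      newtonT (V s) ⊆ ∑ i ∈ Finset.range (s + 1), ((p : ℝ) ^ i) • newtonT (Λ i) := by
  simpa only [newtonT_eq_newtonPolytope] using
    newtonPolytope_ghost_subset (Fact.out : p.Prime).ne_zero (tExponent r nz) Λ hV

/-- for the ghosts `V_s` (defined by the recursion
`V_s = W_s - Σ_{j=1}^s V_{j-1}(x)·W_s^{(j)}(x^{p^j})`), the Newton polytope with respect
to the `t`-variables satisfies `N(V_s) ⊆ N(Λ_0) + p·N(Λ_1) + ⋯ + p^s·N(Λ_s)`
(Minkowski sum of dilations). -/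
theorem ghost_newton_polytope (p : ℕ) (hp : p.Prime) [Fact p.Prime]
    (r nz : ℕ) (l : ℕ) (Λ V : ℕ → MvLaurent ℤ_[p] (Fin r ⊕ Fin nz))
    (hV : ∀ s ≤ l, V s =
      Wseg p Λ 0 s -
        ∑ j ∈ Finset.Icc 1 s,
          V (j - 1) * frobSubst ℤ_[p] (Fin r ⊕ Fin nz) (p ^ j) (Wseg p Λ j s)) :
    ∀ s ≤ l,
      newtonT (V s) ⊆ ∑ i ∈ Finset.range (s + 1), ((p : ℝ) ^ i) • newtonT (Λ i) :=
  ghost_newton_polytope_general p r nz l Λ V hV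
end

section
/- Let r = 1, Δ = {0,1} ⊂ ℤ, and N = [-(p-1)/2, 3(p-1)/2] ⊂ ℝ. Then for every l, the tuple (N, N, ..., N) (l+1 copies) is Δ-admissible, i.e., for all 0 ≤ i ≤ j < l, (Δ + N + pN + ... + p^(j-i)N) ∩ p^(j-i+1)ℤ ⊂ p^(j-i+1)Δ. -/
open Pointwise Set

/-!
Write `P = p ^ m` with `m = j - i + 1`. Summing the dilates `p ^ k • N`, `k < m`, gives a subset of
`[-(P - 1)/2, 3(P - 1)/2]`, because `(∑ k < m, p ^ k) (p - 1) = P - 1`. Adding `Δ ⊆ [0, 1]` yields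
a window of length `2P - 1 < 2P` containing `0` and `P`, so its only multiples of `P` are `0` and `P`.
-/

section OrderedSemiring

variable {R : Type*} [Semiring R] [PartialOrder R] [IsOrderedRing R]

theorem smul_Icc_subset_Icc_of_nonneg {r : R} (hr : 0 ≤ r) (a b : R) :
    r • Icc a b ⊆ Icc (r * a) (r * b) := by
  rintro _ ⟨x, ⟨hax, hxb⟩, rfl⟩
  exact ⟨mul_le_mul_of_nonneg_left hax hr, mul_le_mul_of_nonneg_left hxb hr⟩

theorem sum_smul_Icc_subset_Icc {ι : Type*} (s : Finset ι) {w : ι → R} (hw : ∀ i, 0 ≤ w i)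
    (a b : R) : ∑ i ∈ s, w i • Icc a b ⊆ Icc ((∑ i ∈ s, w i) * a) ((∑ i ∈ s, w i) * b) := by
  classical
  induction s using Finset.induction_on with
  | empty => simp
  | insert i s hi ih =>
    rw [Finset.sum_insert hi, Finset.sum_insert hi, add_mul, add_mul]
    exact (add_subset_add (smul_Icc_subset_Icc_of_nonneg (hw i) a b) ih).trans
      (Icc_add_Icc_subset _ _ _ _)

end OrderedSemiring

theorem geom_sum_smul_Icc_subset (p : ℝ) (hp : 0 ≤ p) (m : ℕ) (a b : ℝ) :
    ∑ k ∈ Finset.range m, p ^ k • Icc (a * (p - 1)) (b * (p - 1)) ⊆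
      Icc (a * (p ^ m - 1)) (b * (p ^ m - 1)) := by
  have hgeom := geom_sum_mul p m
  refine (sum_smul_Icc_subset_Icc _ (fun k => pow_nonneg hp k) _ _).trans_eq ?_
  rw [← hgeom]
  ring_nf

theorem eq_zero_or_eq_one_of_mul_mem_Icc {P : ℝ} (hP : 0 ≤ P) {t : ℤ}
    (ht : P * t ∈ Icc (-((P - 1) / 2)) (3 * (P - 1) / 2 + 1)) : t = 0 ∨ t = 1 := by
  obtain ⟨hlo, hhi⟩ := ht
  have ht0 : 0 ≤ t := by
    by_contra! h
    have : (t : ℝ) ≤ -1 := by exact_mod_cast Int.le_sub_one_of_lt h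
    nlinarith
  have ht1 : t ≤ 1 := by
    by_contra! h
    have : (2 : ℝ) ≤ t := by exact_mod_cast h
    nlinarith
  omega

theorem interval_tuple_admissible_general (p : ℕ) (l : ℕ) :
    ∀ i j : ℕ, i ≤ j → j < l →
      ((({0, 1} : Set ℝ) +
          ∑ k ∈ Finset.range (j - i + 1),
            ((p : ℝ) ^ k) • Set.Icc (-(((p : ℝ) - 1) / 2)) (3 * ((p : ℝ) - 1) / 2)) ∩
        (((p : ℝ) ^ (j - i + 1)) • (Set.range (Int.cast : ℤ → ℝ)))) ⊆
      ((p : ℝ) ^ (j - i + 1)) • ({0, 1} : Set ℝ) := by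
  intro i j _ _
  rintro _ ⟨⟨y, hy, z, hz, rfl⟩, ⟨_, ⟨t, rfl⟩, hPt⟩⟩
  have hN : Icc (-(((p : ℝ) - 1) / 2)) (3 * ((p : ℝ) - 1) / 2) =
      Icc (-(1 / 2) * ((p : ℝ) - 1)) (3 / 2 * ((p : ℝ) - 1)) := by
    ring_nf
  rw [hN] at hz
  obtain ⟨hzlo, hzhi⟩ := geom_sum_smul_Icc_subset p p.cast_nonneg _ _ _ hz
  have hy01 : 0 ≤ y ∧ y ≤ 1 := by rcases hy with rfl | rfl <;> norm_num
  simp only [smul_eq_mul] at hPt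
  have ht := eq_zero_or_eq_one_of_mul_mem_Icc (pow_nonneg p.cast_nonneg (j - i + 1)) (t := t)
    ⟨by linarith, by linarith⟩
  rcases ht with rfl | rfl
  · exact ⟨0, by simp, by simpa using hPt⟩
  · exact ⟨1, by simp, by simpa using hPt⟩

/-- let `p` be an odd prime, `Δ = {0,1} ⊂ ℤ` and
`N = [-(p-1)/2, 3(p-1)/2] ⊂ ℝ`.  Then the constant tuple `(N, N, …, N)` is
`Δ`-admissible: for all `0 ≤ i ≤ j < l`,
`(Δ + N + pN + ⋯ + p^{j-i}N) ∩ p^{j-i+1}ℤ ⊆ p^{j-i+1}Δ`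
(Minkowski sums and dilations of subsets of `ℝ`). -/
theorem interval_tuple_admissible (p : ℕ) (hp : p.Prime) (hodd : Odd p) (l : ℕ) :
    ∀ i j : ℕ, i ≤ j → j < l →
      ((({0, 1} : Set ℝ) +
          ∑ k ∈ Finset.range (j - i + 1),
            ((p : ℝ) ^ k) • Set.Icc (-(((p : ℝ) - 1) / 2)) (3 * ((p : ℝ) - 1) / 2)) ∩
        (((p : ℝ) ^ (j - i + 1)) • (Set.range (Int.cast : ℤ → ℝ)))) ⊆
      ((p : ℝ) ^ (j - i + 1)) • ({0, 1} : Set ℝ) :=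
  interval_tuple_admissible_general p l
end

section
/- Let p be an odd prime, g ≥ 1, Δ = {1, 2, ..., g} ⊂ ℤ, and N = [0, gp + (p-1)/2 - g] ⊂ ℝ. Then the infinite tuple (N, N, N, ...) is Δ-admissible: for all i ≤ j, (Δ + N + pN + ... + p^(j-i)N) ∩ p^(j-i+1)ℤ ⊂ p^(j-i+1)Δ. -/
open Pointwise

/-! Writing `N = [0, (g + 1/2)(p - 1)]`, the telescoping identity `(p - 1) ∑_{k<n} p^k = p^n - 1`
puts every element of `Δ + N + pN + ⋯ + p^{n-1}N` in `[1, (g + 1/2)p^n - 1/2]`, which is strictly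
below `(g + 1) p^n`. So a point `p^n m` of it with `m ∈ ℤ` has `0 < m < g + 1`, i.e. `m ∈ Δ`. -/

theorem Set.finsetSum_smul_Icc_subset {ι α : Type*} [Semiring α] [PartialOrder α]
    [IsOrderedRing α] (s : Finset ι) {c : ι → α} (hc : ∀ i ∈ s, 0 ≤ c i) (a b : α) :
    ∑ i ∈ s, c i • Set.Icc a b ⊆ Set.Icc (∑ i ∈ s, c i * a) (∑ i ∈ s, c i * b) := by
  intro x hx
  obtain ⟨f, hf, rfl⟩ := (Set.mem_finsetSum _ _ _).mp hx
  have hmem : ∀ i ∈ s, c i * a ≤ f i ∧ f i ≤ c i * b := fun i hi ↦ by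
    obtain ⟨t, ⟨hat, htb⟩, hft⟩ := hf hi
    rw [← hft]
    exact ⟨mul_le_mul_of_nonneg_left hat (hc i hi), mul_le_mul_of_nonneg_left htb (hc i hi)⟩
  exact ⟨Finset.sum_le_sum fun i hi ↦ (hmem i hi).1, Finset.sum_le_sum fun i hi ↦ (hmem i hi).2⟩

theorem sum_pow_smul_Icc_mul_sub_one_subset {p : ℝ} (hp : 0 ≤ p) (c : ℝ) (n : ℕ) :
    ∑ k ∈ Finset.range n, p ^ k • Set.Icc 0 (c * (p - 1)) ⊆ Set.Icc 0 (c * (p ^ n - 1)) := by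
  have hbound : ∑ k ∈ Finset.range n, p ^ k * (c * (p - 1)) = c * (p ^ n - 1) := by
    rw [← Finset.sum_mul, ← geom_sum_mul]
    ring
  have hsum := Set.finsetSum_smul_Icc_subset (Finset.range n) (fun k _ ↦ pow_nonneg hp k) 0
    (c * (p - 1))
  simp only [mul_zero, Finset.sum_const_zero] at hsum
  rwa [hbound] at hsum

theorem intCast_Icc_add_subset_Icc {g : ℤ} {s : Set ℝ} {b : ℝ} (hs : s ⊆ Set.Icc 0 b) :
    (Int.cast '' ↑(Finset.Icc 1 g) : Set ℝ) + s ⊆ Set.Icc 1 (g + b) := by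
  rintro _ ⟨_, ⟨d, hd, rfl⟩, t, ht, rfl⟩
  obtain ⟨hd1, hdg⟩ := Finset.mem_Icc.mp hd
  obtain ⟨ht0, htb⟩ := hs ht
  have hd1' : (1 : ℝ) ≤ d := by exact_mod_cast hd1
  have hdg' : (d : ℝ) ≤ g := by exact_mod_cast hdg
  exact ⟨by linarith, by linarith⟩

theorem mem_Icc_of_mul_mem_Icc {P : ℝ} (hP : 0 ≤ P) {m g : ℤ}
    (h : P * m ∈ Set.Icc 1 ((g + 1 / 2) * P - 1 / 2)) : m ∈ Finset.Icc 1 g := by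
  obtain ⟨h1, h2⟩ := h
  have hPm : 0 < P * m := by linarith
  have hm : (0 : ℝ) < m := pos_of_mul_pos_right hPm hP
  have hmg : P * m < P * (g + 1) := by linarith
  have hmg' : (m : ℝ) < g + 1 := lt_of_mul_lt_mul_left hmg hP
  rw [Finset.mem_Icc]
  exact ⟨by exact_mod_cast hm, Int.lt_add_one_iff.mp (by exact_mod_cast hmg')⟩

theorem interval_tuple_admissible_KZ_general (p g : ℕ) :
    ∀ i j : ℕ, i ≤ j →
      (((Int.cast '' ↑(Finset.Icc (1 : ℤ) g) : Set ℝ) +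
          ∑ k ∈ Finset.range (j - i + 1),
            ((p : ℝ) ^ k) •
              Set.Icc (0 : ℝ) ((g : ℝ) * p + ((p : ℝ) - 1) / 2 - g)) ∩
        (((p : ℝ) ^ (j - i + 1)) • (Set.range (Int.cast : ℤ → ℝ)))) ⊆
      ((p : ℝ) ^ (j - i + 1)) • (Int.cast '' ↑(Finset.Icc (1 : ℤ) g) : Set ℝ) := by
  intro i j _
  set n := j - i + 1
  have hN : (g : ℝ) * p + ((p : ℝ) - 1) / 2 - g = ((g : ℤ) + 1 / 2) * (p - 1) := by
    push_cast
    ring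
  rw [hN]
  rintro _ ⟨hx, _, ⟨m, rfl⟩, rfl⟩
  have hrange := intCast_Icc_add_subset_Icc
    (sum_pow_smul_Icc_mul_sub_one_subset (Nat.cast_nonneg p) ((g : ℤ) + 1 / 2) n) hx
  have hupper : ((g : ℤ) : ℝ) + ((g : ℤ) + 1 / 2) * ((p : ℝ) ^ n - 1)
      = ((g : ℤ) + 1 / 2) * (p : ℝ) ^ n - 1 / 2 := by
    ring
  simp only [smul_eq_mul, hupper] at hrange
  exact Set.smul_mem_smul_set
    ⟨m, mem_Icc_of_mul_mem_Icc (pow_nonneg (Nat.cast_nonneg p) n) hrange, rfl⟩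

/-- let `p` be an odd prime, `g ≥ 1`, `Δ = {1,…,g} ⊂ ℤ` and
`N = [0, gp + (p-1)/2 - g] ⊂ ℝ`.  Then the infinite constant tuple `(N, N, N, …)` is
`Δ`-admissible: for all `i ≤ j`,
`(Δ + N + pN + ⋯ + p^{j-i}N) ∩ p^{j-i+1}ℤ ⊆ p^{j-i+1}Δ`
(Minkowski sums and dilations of subsets of `ℝ`). -/
theorem interval_tuple_admissible_KZ (p g : ℕ) (hp : p.Prime) (hodd : Odd p)
    (hg : 1 ≤ g) :
    ∀ i j : ℕ, i ≤ j →
      (((Int.cast '' ↑(Finset.Icc (1 : ℤ) g) : Set ℝ) +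
          ∑ k ∈ Finset.range (j - i + 1),
            ((p : ℝ) ^ k) •
              Set.Icc (0 : ℝ) ((g : ℝ) * p + ((p : ℝ) - 1) / 2 - g)) ∩
        (((p : ℝ) ^ (j - i + 1)) • (Set.range (Int.cast : ℤ → ℝ)))) ⊆
      ((p : ℝ) ^ (j - i + 1)) • (Int.cast '' ↑(Finset.Icc (1 : ℤ) g) : Set ℝ) :=
  interval_tuple_admissible_KZ_general p g
end

section
/- Let F(z) be a nonzero polynomial in n variables over 𝔽_p of total degree at most d, and let m satisfy p^m > d. Then F is nonzero at at least ((p^(mn)-1)/(p^m-1))·(p^m - 1 - d) + 1 points of (𝔽_{p^m})^n. -/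
/-!
Write `q = p ^ m`. Since `(∑_{k<n} q^k)(q - 1) = q^n - 1`, the bound equals
`q^n - d (1 + q + ⋯ + q^{n-1})`, so it suffices that `F` has at most `d q^{n-1}` zeros
in `𝔽_q^n`, which is the Schwartz–Zippel lemma.
-/

open MvPolynomial Finset

namespace MvPolynomial

theorem totalDegree_map_le {R S σ : Type*} [CommSemiring R] [CommSemiring S] (f : R →+* S)
    (p : MvPolynomial σ R) : (map f p).totalDegree ≤ p.totalDegree :=
  Finset.sup_mono (support_map_subset f p)

theorem card_eval_eq_zero_mul_le {R : Type*} [CommRing R] [IsDomain R] [Fintype R]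
    [DecidableEq R] {n : ℕ} {p : MvPolynomial (Fin n) R} (hp : p ≠ 0) :
    #{x | eval x p = 0} * Fintype.card R ≤ p.totalDegree * Fintype.card R ^ n := by
  have h := schwartz_zippel_totalDegree hp univ
  rw [Fintype.piFinset_univ, card_univ] at h
  have hR : (0 : ℚ≥0) < Fintype.card R := by exact_mod_cast Fintype.card_pos
  rw [div_le_div_iff₀ (by positivity) hR] at h
  exact_mod_cast h

end MvPolynomial

theorem Nat.geom_sum_mul_tsub_add_le {q d z n : ℕ} (hdq : d < q) (hz : z * q ≤ d * q ^ n) :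
    (∑ k ∈ range n, q ^ k) * (q - 1 - d) + 1 + z ≤ q ^ n := by
  obtain ⟨r, rfl⟩ : ∃ r, q = r + 1 := ⟨q - 1, by omega⟩
  set S := ∑ k ∈ range n, (r + 1) ^ k
  have hgeom : S * r + 1 = (r + 1) ^ n := geom_sum_mul_add r n
  have hzS : z ≤ d * S := by
    refine Nat.lt_succ_iff.mp (Nat.lt_of_mul_lt_mul_right (a := r + 1) ?_)
    calc z * (r + 1) ≤ d * (S * r + 1) := hgeom ▸ hz
      _ < (d * S + 1) * (r + 1) := by nlinarith
  have hsplit : S * (r - d) + d * S = S * r := by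
    rw [mul_comm d, ← mul_add, Nat.sub_add_cancel (by omega)]
  rw [← hgeom, Nat.add_sub_cancel]
  omega

theorem MvPolynomial.le_card_eval_ne_zero {K : Type*} [Field K] [Fintype K] [DecidableEq K]
    {n d : ℕ} {F : MvPolynomial (Fin n) K} (hF : F ≠ 0) (hd : F.totalDegree ≤ d)
    (hdK : d < Fintype.card K) :
    (∑ k ∈ range n, Fintype.card K ^ k) * (Fintype.card K - 1 - d) + 1 ≤
      #{a | eval a F ≠ 0} := by
  have hzeros := (card_eval_eq_zero_mul_le hF).trans (Nat.mul_le_mul_right _ hd)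
  have hsum := card_filter_add_card_filter_not (s := univ) (fun a : Fin n → K => eval a F = 0)
  rw [card_univ, Fintype.card_fun, Fintype.card_fin] at hsum
  have hbound := Nat.geom_sum_mul_tsub_add_le hdK hzeros
  simp only [ne_eq]
  omega

theorem count_nonvanishing_points_general (p m n d : ℕ) [Fact p.Prime]
    (hpm : d < p ^ m)
    (F : MvPolynomial (Fin n) (ZMod p)) (hF : F ≠ 0) (hd : F.totalDegree ≤ d) :
    (∑ k ∈ Finset.range n, (p ^ m) ^ k) * (p ^ m - 1 - d) + 1 ≤
      {a : Fin n → GaloisField p m |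
        MvPolynomial.eval a
          (MvPolynomial.map (algebraMap (ZMod p) (GaloisField p m)) F) ≠ 0}.ncard := by
  classical
  let := Fintype.ofFinite (GaloisField p m)
  -- `GaloisField p 0` is `ZMod p`, so in general only `p ^ m ≤ #𝔽`.
  have hcard : p ^ m ≤ Fintype.card (GaloisField p m) := by
    rw [← Nat.card_eq_fintype_card]
    rcases eq_or_ne m 0 with rfl | hm
    · exact Nat.one_le_iff_ne_zero.mpr Nat.card_pos.ne'
    · exact (GaloisField.card p m hm).ge
  set f := algebraMap (ZMod p) (GaloisField p m)
  have hmap := le_card_eval_ne_zero (F := map f F)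
    ((map_ne_zero_iff _ (map_injective f f.injective)).mpr hF)
    ((totalDegree_map_le f F).trans hd) (hpm.trans_le hcard)
  rw [← Set.ncard_coe_finset, coe_filter_univ] at hmap
  refine le_trans ?_ hmap
  gcongr

/-- let `F ∈ 𝔽_p[z_1,…,z_n]` be nonzero of total degree at most `d`, and
let `p^m > d`.  Then `F` is nonzero at at least `((p^{mn}-1)/(p^m-1))·(p^m-1-d) + 1`
points of `(𝔽_{p^m})^n` (the quotient `(p^{mn}-1)/(p^m-1)` being the geometric sum
`1 + p^m + ⋯ + p^{m(n-1)}`). -/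
theorem count_nonvanishing_points (p m n d : ℕ) (hp : p.Prime) [Fact p.Prime]
    (hpm : d < p ^ m)
    (F : MvPolynomial (Fin n) (ZMod p)) (hF : F ≠ 0) (hd : F.totalDegree ≤ d) :
    (∑ k ∈ Finset.range n, (p ^ m) ^ k) * (p ^ m - 1 - d) + 1 ≤
      {a : Fin n → GaloisField p m |
        MvPolynomial.eval a
          (MvPolynomial.map (algebraMap (ZMod p) (GaloisField p m)) F) ≠ 0}.ncard :=
  count_nonvanishing_points_general p m n d hpm F hF hd
end

section
/- Let n = 2g+1, Φ_s(t,z) = ((t-z_1)···(t-z_n))^((p^s-1)/2), and let Ω_{ij} be the n×n matrix with entries -1 at positions (i,i),(j,j), +1 at (i,j),(j,i), and 0 elsewhere. For each i, the column vector identity (∂/∂z_i + ((p^s-1)/2)·Σ_{j≠i} Ω_{ij}/(z_i - z_j)) applied to the vector (Φ_s(t,z)/(t-z_1), ..., Φ_s(t,z)/(t-z_n)) equals ∂Ψ_s^i/∂t, where Ψ_s^i is the vector with -Φ_s(t,z)/(t-z_i) in position i and 0 elsewhere. -/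
open Polynomial

/-- The master polynomial `Φ_s(t,z) = ((t-z_1)⋯(t-z_n))^((p^s-1)/2)`, as a polynomial
in `t` with coefficients in `ℤ[z_1,…,z_n]`. -/
noncomputable def masterPoly (p s n : ℕ) : Polynomial (MvPolynomial (Fin n) ℤ) :=
  (∏ i : Fin n, (X - C (MvPolynomial.X i))) ^ ((p ^ s - 1) / 2)

/-- `Φ_s(t,z)/(t - z_i) = (t-z_i)^((p^s-1)/2 - 1) · ∏_{j≠i} (t-z_j)^((p^s-1)/2)`. -/
noncomputable def masterQuot (p s n : ℕ) (i : Fin n) :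
    Polynomial (MvPolynomial (Fin n) ℤ) :=
  (X - C (MvPolynomial.X i)) ^ ((p ^ s - 1) / 2 - 1) *
    ∏ j ∈ Finset.univ.erase i, (X - C (MvPolynomial.X j)) ^ ((p ^ s - 1) / 2)

/-- The formal derivative `∂/∂z_i`, applied coefficientwise to a polynomial in `t`
with coefficients in `ℤ[z_1,…,z_n]`. -/
noncomputable def dz {n : ℕ} (i : Fin n) (f : Polynomial (MvPolynomial (Fin n) ℤ)) :
    Polynomial (MvPolynomial (Fin n) ℤ) :=
  f.sum fun k a => C (MvPolynomial.pderiv i a) * X ^ k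

/-- The matrix `Ω_{ij}`: `-1` at positions `(i,i)`, `(j,j)`, `+1` at `(i,j)`, `(j,i)`,
`0` elsewhere. -/
def Om (R : Type*) [CommRing R] {n : ℕ} (i j : Fin n) : Matrix (Fin n) (Fin n) R :=
  fun k l =>
    if (k = i ∧ l = i) ∨ (k = j ∧ l = j) then -1
    else if (k = i ∧ l = j) ∨ (k = j ∧ l = i) then 1 else 0

/-!
Write `L_j = t - z_j`. On polynomials in the `L_j`, `∂/∂z_i` acts as `-∂/∂L_i` and `∂/∂t` as
`Σ_j ∂/∂L_j`. Since `L_k - L_i = z_i - z_k`, two entries of the vector differ by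
`(z_i - z_k) Φ/(L_i L_k)`; so once the denominators are cleared, the `Ω`-terms and both
derivatives are explicit multiples of the `Φ/(L_i L_j)`, and the identity reduces to the product
rule for `∂/∂t (Φ/L_i)`.
-/

variable {n : ℕ}

theorem coeff_dz (i : Fin n) (f : (MvPolynomial (Fin n) ℤ)[X]) (m : ℕ) :
    (dz i f).coeff m = MvPolynomial.pderiv i (f.coeff m) := by
  simp only [dz, Polynomial.sum, finsetSum_coeff, coeff_C_mul_X_pow]
  rw [Finset.sum_ite_eq]
  split_ifs with h
  · rfl
  · rw [notMem_support_iff.mp h, map_zero]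

noncomputable def dzDerivation (i : Fin n) :
    Derivation ℤ (MvPolynomial (Fin n) ℤ)[X] (MvPolynomial (Fin n) ℤ)[X] :=
  PolynomialModule.equivPolynomialSelf.compDer (MvPolynomial.pderiv i).mapCoeffs

theorem coe_dzDerivation (i : Fin n) : ⇑(dzDerivation i) = dz i :=
  funext fun f => Polynomial.ext fun m => by rw [coeff_dz]; rfl

theorem dz_one (i : Fin n) : dz i 1 = 0 := by
  rw [← coe_dzDerivation, Derivation.map_one_eq_zero]

theorem dz_X_sub_C_self (i : Fin n) : dz i (X - C (MvPolynomial.X i)) = -1 := by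
  ext m
  rw [coeff_dz, coeff_sub, coeff_X, coeff_C, map_sub, coeff_neg, coeff_one]
  split_ifs <;> simp

theorem dz_X_sub_C_of_ne {i j : Fin n} (h : j ≠ i) : dz i (X - C (MvPolynomial.X j)) = 0 := by
  ext m
  rw [coeff_dz, coeff_sub, coeff_X, coeff_C, map_sub, coeff_zero]
  split_ifs <;> simp [MvPolynomial.pderiv_X_of_ne h]

theorem dz_X_sub_C_self_pow (i : Fin n) (m : ℕ) :
    dz i ((X - C (MvPolynomial.X i)) ^ m) = -derivative ((X - C (MvPolynomial.X i)) ^ m) := by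
  rw [← coe_dzDerivation, Derivation.leibniz_pow, coe_dzDerivation, dz_X_sub_C_self,
    derivative_X_sub_C_pow, nsmul_eq_mul, C_eq_natCast, smul_eq_mul]
  ring

theorem dz_prod_X_sub_C_pow_of_notMem {i : Fin n} {s : Finset (Fin n)} (hi : i ∉ s) (e : ℕ) :
    dz i (∏ j ∈ s, (X - C (MvPolynomial.X j)) ^ e) = 0 := by
  rw [← coe_dzDerivation]
  refine Finset.prod_induction _ (fun f => dzDerivation i f = 0)
    (fun f g hf hg => by rw [Derivation.leibniz, hf, hg, smul_zero, smul_zero, add_zero])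
    (Derivation.map_one_eq_zero _) fun j hj => ?_
  rw [Derivation.leibniz_pow, coe_dzDerivation, dz_X_sub_C_of_ne (ne_of_mem_of_not_mem hj hi),
    smul_zero, smul_zero]

theorem Om_mulVec_of_ne {R : Type*} [CommRing R] {i j : Fin n} (hij : j ≠ i) (v : Fin n → R)
    (k : Fin n) :
    (Om R i j).mulVec v k = if k = i then v j - v i else if k = j then v i - v j else 0 := by
  have hrow : Om R i j k = if k = i then Pi.single j 1 - Pi.single i 1
      else if k = j then Pi.single i 1 - Pi.single j 1 else 0 := by
    ext l
    by_cases hli : l = i <;> by_cases hlj : l = j <;> by_cases hki : k = i <;>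
      by_cases hkj : k = j <;> simp_all [Om]
  rw [Matrix.mulVec, hrow]
  split_ifs <;> simp only [sub_dotProduct, single_one_dotProduct, zero_dotProduct]

/-- The entries `Φ/(t - z_k)` of the vector for `Φ = ∏_j (t - z_j)^e`; `masterQuot p s n` is
`kzVec ((p^s - 1)/2)`. -/
noncomputable def kzVec (e : ℕ) (k : Fin n) : (MvPolynomial (Fin n) ℤ)[X] :=
  (X - C (MvPolynomial.X k)) ^ (e - 1) * ∏ j ∈ Finset.univ.erase k, (X - C (MvPolynomial.X j)) ^ e

/-- `Φ/((t - z_i)(t - z_k))` for `Φ = ∏_j (t - z_j)^e` and `i ≠ k`. -/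
noncomputable def pairQuot (e : ℕ) (i k : Fin n) : (MvPolynomial (Fin n) ℤ)[X] :=
  (X - C (MvPolynomial.X i)) ^ (e - 1) * (X - C (MvPolynomial.X k)) ^ (e - 1) *
    ∏ l ∈ (Finset.univ.erase i).erase k, (X - C (MvPolynomial.X l)) ^ e

theorem kzVec_eq_of_ne (e : ℕ) {i k : Fin n} (h : k ≠ i) :
    kzVec e k = (X - C (MvPolynomial.X i)) ^ e * ((X - C (MvPolynomial.X k)) ^ (e - 1) *
      ∏ l ∈ (Finset.univ.erase i).erase k, (X - C (MvPolynomial.X l)) ^ e) := by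
  rw [kzVec, ← Finset.mul_prod_erase _ _ (Finset.mem_erase.2 ⟨h.symm, Finset.mem_univ i⟩),
    Finset.erase_right_comm]
  ring

theorem dz_kzVec_self (e : ℕ) (i : Fin n) :
    dz i (kzVec e i) = -derivative ((X - C (MvPolynomial.X i)) ^ (e - 1)) *
      ∏ j ∈ Finset.univ.erase i, (X - C (MvPolynomial.X j)) ^ e := by
  rw [kzVec, ← coe_dzDerivation, Derivation.leibniz, coe_dzDerivation,
    dz_prod_X_sub_C_pow_of_notMem (Finset.notMem_erase i _), dz_X_sub_C_self_pow, smul_zero,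
    zero_add, smul_eq_mul, mul_comm]

theorem dz_kzVec_of_ne (e : ℕ) {i k : Fin n} (h : k ≠ i) :
    dz i (kzVec e k) = -(e • pairQuot e i k) := by
  have hi : i ∉ (Finset.univ.erase i).erase k := fun hi =>
    Finset.notMem_erase i _ (Finset.mem_of_mem_erase hi)
  rw [kzVec_eq_of_ne e h, ← coe_dzDerivation, Derivation.leibniz, Derivation.leibniz,
    coe_dzDerivation, dz_prod_X_sub_C_pow_of_notMem hi, dz_X_sub_C_self_pow,
    ← coe_dzDerivation, Derivation.leibniz_pow, coe_dzDerivation, dz_X_sub_C_of_ne h,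
    derivative_X_sub_C_pow, pairQuot]
  simp only [smul_eq_mul, nsmul_eq_mul, C_eq_natCast]
  ring

theorem kzVec_sub_kzVec {e : ℕ} (he : 1 ≤ e) {i k : Fin n} (h : k ≠ i) :
    kzVec e i - kzVec e k = C (MvPolynomial.X i - MvPolynomial.X k) * pairQuot e i k := by
  obtain ⟨e, rfl⟩ := Nat.exists_eq_add_of_le' he
  rw [kzVec_eq_of_ne _ h, kzVec, pairQuot,
    ← Finset.mul_prod_erase _ _ (Finset.mem_erase.2 ⟨h, Finset.mem_univ k⟩), map_sub]
  simp only [Nat.add_sub_cancel, pow_succ]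
  ring

theorem mul_derivative_prod_erase (e : ℕ) (i : Fin n) :
    (X - C (MvPolynomial.X i)) ^ (e - 1) *
        derivative (∏ j ∈ Finset.univ.erase i, (X - C (MvPolynomial.X j)) ^ e) =
      e • ∑ j ∈ Finset.univ.erase i, pairQuot e i j := by
  rw [derivative_prod_finset, Finset.mul_sum, Finset.smul_sum]
  refine Finset.sum_congr rfl fun j _ => ?_
  rw [derivative_X_sub_C_pow, pairQuot, nsmul_eq_mul, C_eq_natCast]
  ring

theorem kz_identity_self (e : ℕ) (i : Fin n) :
    C (∏ j ∈ Finset.univ.erase i, (MvPolynomial.X i - MvPolynomial.X j)) * dz i (kzVec e i) +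
        e • ∑ j ∈ Finset.univ.erase i,
          C (∏ l ∈ (Finset.univ.erase i).erase j, (MvPolynomial.X i - MvPolynomial.X l)) *
            (Om (MvPolynomial (Fin n) ℤ)[X] i j).mulVec (kzVec e) i =
      C (∏ j ∈ Finset.univ.erase i, (MvPolynomial.X i - MvPolynomial.X j)) *
        derivative (-kzVec e i) := by
  rcases Nat.eq_zero_or_pos e with rfl | he
  · simp [kzVec, dz_one]
  have hterm : ∀ j ∈ Finset.univ.erase i,
      C (∏ l ∈ (Finset.univ.erase i).erase j, (MvPolynomial.X i - MvPolynomial.X l)) *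
          (Om (MvPolynomial (Fin n) ℤ)[X] i j).mulVec (kzVec e) i =
        -(C (∏ j ∈ Finset.univ.erase i, (MvPolynomial.X i - MvPolynomial.X j)) *
          pairQuot e i j) := by
    intro j hj
    rw [Om_mulVec_of_ne (Finset.ne_of_mem_erase hj), if_pos rfl, ← neg_sub,
      kzVec_sub_kzVec he (Finset.ne_of_mem_erase hj), ← Finset.mul_prod_erase _ _ hj, map_mul]
    ring
  rw [Finset.sum_congr rfl hterm, Finset.sum_neg_distrib, ← Finset.mul_sum, dz_kzVec_self,
    derivative_neg, kzVec, derivative_mul]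
  linear_combination
    C (∏ j ∈ Finset.univ.erase i, (MvPolynomial.X i - MvPolynomial.X j)) *
      mul_derivative_prod_erase e i

theorem kz_identity_of_ne (e : ℕ) {i k : Fin n} (h : k ≠ i) :
    C (∏ j ∈ Finset.univ.erase i, (MvPolynomial.X i - MvPolynomial.X j)) * dz i (kzVec e k) +
        e • ∑ j ∈ Finset.univ.erase i,
          C (∏ l ∈ (Finset.univ.erase i).erase j, (MvPolynomial.X i - MvPolynomial.X l)) *
            (Om (MvPolynomial (Fin n) ℤ)[X] i j).mulVec (kzVec e) k = 0 := by
  rcases Nat.eq_zero_or_pos e with rfl | he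
  · simp [kzVec, dz_one]
  have hk : k ∈ Finset.univ.erase i := Finset.mem_erase.2 ⟨h, Finset.mem_univ k⟩
  have hterm : ∀ j ∈ Finset.univ.erase i,
      C (∏ l ∈ (Finset.univ.erase i).erase j, (MvPolynomial.X i - MvPolynomial.X l)) *
          (Om (MvPolynomial (Fin n) ℤ)[X] i j).mulVec (kzVec e) k =
        if k = j then
          C (∏ l ∈ Finset.univ.erase i, (MvPolynomial.X i - MvPolynomial.X l)) * pairQuot e i k
        else 0 := by
    intro j hj
    rw [Om_mulVec_of_ne (Finset.ne_of_mem_erase hj), if_neg h]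
    split_ifs with hkj
    · rw [← hkj, kzVec_sub_kzVec he h, ← Finset.mul_prod_erase _ _ hk, map_mul]
      ring
    · exact mul_zero _
  rw [Finset.sum_congr rfl hterm, Finset.sum_ite_eq, if_pos hk, dz_kzVec_of_ne e h]
  ring

theorem master_polynomial_KZ_identity_general (p s g : ℕ) :
    ∀ i k : Fin (2 * g + 1),
      C (∏ j ∈ Finset.univ.erase i, (MvPolynomial.X i - MvPolynomial.X j)) *
          dz i (masterQuot p s (2 * g + 1) k) +
        ((p ^ s - 1) / 2) •
          ∑ j ∈ Finset.univ.erase i,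
            C (∏ l ∈ (Finset.univ.erase i).erase j,
                (MvPolynomial.X i - MvPolynomial.X l)) *
              ((Om (Polynomial (MvPolynomial (Fin (2 * g + 1)) ℤ)) i j).mulVec
                (fun m => masterQuot p s (2 * g + 1) m) k) =
      C (∏ j ∈ Finset.univ.erase i, (MvPolynomial.X i - MvPolynomial.X j)) *
        Polynomial.derivative
          (if k = i then -(masterQuot p s (2 * g + 1) i) else 0) := by
  intro i k
  rcases eq_or_ne k i with rfl | h
  · rw [if_pos rfl]
    exact kz_identity_self _ k
  · rw [if_neg h, derivative_zero, mul_zero]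
    exact kz_identity_of_ne _ h

/-- with `n = 2g+1`, `e = (p^s-1)/2` and
`v = (Φ_s/(t-z_1), …, Φ_s/(t-z_n))`, the vector identity
`(∂/∂z_i + e·Σ_{j≠i} Ω_{ij}/(z_i-z_j)) v = ∂Ψ_s^i/∂t` holds for every `i`, where
`Ψ_s^i` has `-Φ_s/(t-z_i)` in position `i` and `0` elsewhere.  The identity is stated
componentwise after clearing the denominators `z_i - z_j`. -/
theorem master_polynomial_KZ_identity (p s g : ℕ) (hp : p.Prime) (hodd : Odd p)
    (hs : 1 ≤ s) :
    ∀ i k : Fin (2 * g + 1),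
      C (∏ j ∈ Finset.univ.erase i, (MvPolynomial.X i - MvPolynomial.X j)) *
          dz i (masterQuot p s (2 * g + 1) k) +
        ((p ^ s - 1) / 2) •
          ∑ j ∈ Finset.univ.erase i,
            C (∏ l ∈ (Finset.univ.erase i).erase j,
                (MvPolynomial.X i - MvPolynomial.X l)) *
              ((Om (Polynomial (MvPolynomial (Fin (2 * g + 1)) ℤ)) i j).mulVec
                (fun m => masterQuot p s (2 * g + 1) m) k) =
      C (∏ j ∈ Finset.univ.erase i, (MvPolynomial.X i - MvPolynomial.X j)) *
        Polynomial.derivative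
          (if k = i then -(masterQuot p s (2 * g + 1) i) else 0) :=
  master_polynomial_KZ_identity_general p s g
end

section
/- Let p be an odd prime, s ≥ 1, n = 2g+1, and Φ_s(t,z) = ((t-z_1)···(t-z_n))^((p^s-1)/2). For ℓ = 1,...,g, let I_{s,ℓ}(z) = (I_{s,ℓ,1},...,I_{s,ℓ,n}) be the coefficient of t^(ℓp^s - 1) in the vector (Φ_s/(t-z_1), ..., Φ_s/(t-z_n)). Then I_{s,ℓ} is a polynomial solution modulo p^s of the KZ system: ∂I/∂z_i ≡ (1/2)Σ_{j≠i} (Ω_{ij}/(z_i - z_j))·I (mod p^s) for all i (after clearing the denominators z_i - z_j), and I_{s,ℓ,1} + ... + I_{s,ℓ,n} ≡ 0 (mod p^s). -/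
/-!
Write `Φ = ∏ⱼ (t - z_j)^m` with `m = (p^s - 1)/2` and `φᵢ = Φ/(t - z_i)`. As polynomials in `t`,
the vector `φ` satisfies the KZ equations exactly, except for the extra term
`-∏_{j≠i}(z_i - z_j) ∂_t φᵢ` in the `i`-th component of the `i`-th equation. Off the diagonal
this is `φᵢ - φₖ = (z_i - z_k) Φ/((t - z_i)(t - z_k))`; on the diagonal one uses that `Φ`
depends only on the differences `t - z_j`, so that `(∂_t + Σⱼ ∂_{z_j}) φᵢ = 0`. In the
coefficient of `t^(ℓp^s - 1)` the extra term becomes a multiple of `ℓp^s`. Similarly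
`∂_t Φ = m Σₖ φₖ` gives `p^s ∣ m Σₖ I_k`, and `m` is invertible modulo `p^s` because
`2m + 1 = p^s`.
-/

open Polynomial

theorem Derivation.map_prod_pow_eq_zero {R A M ι : Type*} [CommSemiring R] [CommSemiring A]
    [Algebra R A] [AddCommMonoid M] [Module A M] [Module R M] (D : Derivation R A M)
    (S : Finset ι) (f : ι → A) (e : ι → ℕ) (h : ∀ j ∈ S, D (f j) = 0) :
    D (∏ j ∈ S, f j ^ e j) = 0 := by
  induction S using Finset.cons_induction with
  | empty => simp
  | cons a S _ ih =>
    rw [Finset.prod_cons, Derivation.leibniz, Derivation.leibniz_pow,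
      h a (Finset.mem_cons_self a S), ih fun j hj ↦ h j (Finset.mem_cons_of_mem hj)]
    simp

namespace KZ

open MvPolynomial (pderiv)

variable {R σ : Type*} [CommRing R]

noncomputable abbrev linFactor (j : σ) : (MvPolynomial σ R)[X] := X - C (MvPolynomial.X j)

noncomputable def coeffPDeriv (i : σ) :
    Derivation R (MvPolynomial σ R)[X] (MvPolynomial σ R)[X] :=
  PolynomialModule.equivPolynomialSelf.toLinearMap.compDer (pderiv i).mapCoeffs

@[simp]
lemma coeff_coeffPDeriv (i : σ) (f : (MvPolynomial σ R)[X]) (N : ℕ) :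
    (coeffPDeriv i f).coeff N = pderiv i (f.coeff N) := rfl

@[simp]
lemma coeffPDeriv_X (i : σ) : coeffPDeriv i (X : (MvPolynomial σ R)[X]) = 0 := by
  ext N
  simp [coeff_X, apply_ite]

@[simp]
lemma coeffPDeriv_C (i : σ) (a : MvPolynomial σ R) : coeffPDeriv i (C a) = C (pderiv i a) := by
  refine Polynomial.ext fun N ↦ ?_
  rw [coeff_coeffPDeriv, coeff_C, coeff_C]
  split_ifs <;> simp

lemma coeffPDeriv_linFactor_self (i : σ) : coeffPDeriv i (linFactor (R := R) i) = -1 := by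
  simp

lemma coeffPDeriv_linFactor_of_ne {i j : σ} (h : j ≠ i) :
    coeffPDeriv i (linFactor (R := R) j) = 0 := by
  simp [MvPolynomial.pderiv_X_of_ne h]

lemma coeffPDeriv_linFactor_pow_mul {i : σ} {f : (MvPolynomial σ R)[X]}
    (hf : coeffPDeriv i f = 0) (m : ℕ) :
    coeffPDeriv i (linFactor i ^ m * f) = -(m • (linFactor i ^ (m - 1) * f)) := by
  rw [Derivation.leibniz, Derivation.leibniz_pow, hf, coeffPDeriv_linFactor_self]
  simp only [smul_eq_mul, nsmul_eq_mul]
  ring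

lemma coeffPDeriv_prod_linFactor_pow {i : σ} {S : Finset σ} (hi : i ∉ S) (e : σ → ℕ) :
    coeffPDeriv i (∏ j ∈ S, linFactor (R := R) j ^ e j) = 0 :=
  (coeffPDeriv i).map_prod_pow_eq_zero _ _ _ fun _ hj ↦
    coeffPDeriv_linFactor_of_ne fun h ↦ hi (h ▸ hj)

variable [Fintype σ]

noncomputable def shiftDeriv : Derivation R (MvPolynomial σ R)[X] (MvPolynomial σ R)[X] :=
  (derivative' : Derivation (MvPolynomial σ R) _ _).restrictScalars R + ∑ i, coeffPDeriv i

lemma shiftDeriv_apply (f : (MvPolynomial σ R)[X]) :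
    shiftDeriv f = derivative f + ∑ i, coeffPDeriv i f := by
  rw [shiftDeriv, Derivation.add_apply, ← Derivation.coeFnAddMonoidHom_apply (∑ i, _), map_sum,
    Finset.sum_apply]
  rfl

lemma shiftDeriv_linFactor [DecidableEq σ] (j : σ) : shiftDeriv (linFactor (R := R) j) = 0 := by
  rw [shiftDeriv_apply, Finset.sum_eq_single_of_mem j (Finset.mem_univ j)
    fun i _ hij ↦ coeffPDeriv_linFactor_of_ne hij.symm, coeffPDeriv_linFactor_self]
  simp

section

variable [DecidableEq σ]

-- With `Φ = ∏ⱼ (t - z_j)^m`: `phi m i = Φ/(t - z_i)` and `psi m i k = Φ/((t - z_i)(t - z_k))`.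
noncomputable def phi (m : ℕ) (i : σ) : (MvPolynomial σ R)[X] :=
  linFactor i ^ (m - 1) * ∏ j ∈ Finset.univ.erase i, linFactor j ^ m

noncomputable def psi (m : ℕ) (i k : σ) : (MvPolynomial σ R)[X] :=
  linFactor i ^ (m - 1) * linFactor k ^ (m - 1) *
    ∏ l ∈ (Finset.univ.erase i).erase k, linFactor l ^ m

lemma psi_comm (m : ℕ) (i k : σ) : psi (R := R) m i k = psi m k i := by
  rw [psi, psi, Finset.erase_right_comm, mul_comm (linFactor i ^ _)]

lemma linFactor_mul_psi {m : ℕ} (hm : 1 ≤ m) {i k : σ} (hik : i ≠ k) :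
    linFactor k * psi (R := R) m i k = phi m i := by
  obtain ⟨m, rfl⟩ := Nat.exists_eq_add_of_le' hm
  rw [phi, psi, ← Finset.mul_prod_erase _ _ (Finset.mem_erase.2 ⟨hik.symm, Finset.mem_univ k⟩)]
  simp only [Nat.add_sub_cancel]
  ring

lemma phi_sub_phi {m : ℕ} (hm : 1 ≤ m) {i k : σ} (hik : i ≠ k) :
    phi (R := R) m i - phi m k = C (MvPolynomial.X i - MvPolynomial.X k) * psi m i k := by
  rw [← linFactor_mul_psi hm hik, ← linFactor_mul_psi hm hik.symm, psi_comm m k, map_sub]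
  ring

lemma coeffPDeriv_phi_of_ne (m : ℕ) {i k : σ} (hik : i ≠ k) :
    coeffPDeriv k (phi (R := R) m i) = -(m • psi m i k) := by
  have hk : k ∈ Finset.univ.erase i := Finset.mem_erase.2 ⟨hik.symm, Finset.mem_univ k⟩
  have hrest : coeffPDeriv k (linFactor i ^ (m - 1) *
      ∏ l ∈ (Finset.univ.erase i).erase k, linFactor (R := R) l ^ m) = 0 := by
    rw [Derivation.leibniz, Derivation.leibniz_pow, coeffPDeriv_linFactor_of_ne hik,
      coeffPDeriv_prod_linFactor_pow (Finset.notMem_erase k _)]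
    simp
  rw [phi, ← Finset.mul_prod_erase _ _ hk, mul_left_comm,
    coeffPDeriv_linFactor_pow_mul hrest, psi]
  ring

lemma coeffPDeriv_prod_univ_linFactor_pow (m : ℕ) (k : σ) :
    coeffPDeriv k (∏ j, linFactor (R := R) j ^ m) = -(m • phi m k) := by
  rw [← Finset.mul_prod_erase _ _ (Finset.mem_univ k),
    coeffPDeriv_linFactor_pow_mul (coeffPDeriv_prod_linFactor_pow (Finset.notMem_erase k _) _),
    phi]

lemma shiftDeriv_phi (m : ℕ) (i : σ) : shiftDeriv (phi (R := R) m i) = 0 := by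
  have hprod : ∀ (S : Finset σ) (e : σ → ℕ), shiftDeriv (∏ j ∈ S, linFactor (R := R) j ^ e j) = 0 :=
    fun S e ↦ shiftDeriv.map_prod_pow_eq_zero _ _ _ fun j _ ↦ shiftDeriv_linFactor j
  rw [phi, Derivation.leibniz, Derivation.leibniz_pow, shiftDeriv_linFactor, hprod]
  simp

lemma coeffPDeriv_phi_self (m : ℕ) (i : σ) :
    coeffPDeriv i (phi (R := R) m i) =
      -derivative (phi m i) + m • ∑ j ∈ Finset.univ.erase i, psi m i j := by
  have h := shiftDeriv_phi (R := R) m i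
  rw [shiftDeriv_apply, ← Finset.add_sum_erase _ _ (Finset.mem_univ i),
    Finset.sum_congr rfl fun j hj ↦ coeffPDeriv_phi_of_ne m (Finset.ne_of_mem_erase hj).symm,
    Finset.sum_neg_distrib, ← Finset.smul_sum] at h
  linear_combination h

lemma derivative_prod_linFactor_pow (m : ℕ) :
    derivative (∏ j : σ, linFactor (R := R) j ^ m) = m • ∑ k, phi m k := by
  have h := shiftDeriv.map_prod_pow_eq_zero (Finset.univ : Finset σ) (linFactor (R := R))
    (fun _ ↦ m) fun j _ ↦ shiftDeriv_linFactor j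
  rw [shiftDeriv_apply, Finset.sum_congr rfl fun k _ ↦ coeffPDeriv_prod_univ_linFactor_pow m k,
    Finset.sum_neg_distrib, ← Finset.smul_sum] at h
  linear_combination h

lemma prod_sub_X_eq_mul_prod_erase {i k : σ} (hik : i ≠ k) :
    ∏ j ∈ Finset.univ.erase i, (MvPolynomial.X i - MvPolynomial.X j : MvPolynomial σ R) =
      (MvPolynomial.X i - MvPolynomial.X k) *
        ∏ l ∈ (Finset.univ.erase i).erase k, (MvPolynomial.X i - MvPolynomial.X l) :=
  (Finset.mul_prod_erase _ _ (Finset.mem_erase.2 ⟨hik.symm, Finset.mem_univ k⟩)).symm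

lemma kz_phi_of_ne (m : ℕ) {i k : σ} (hik : i ≠ k) :
    C (∏ j ∈ Finset.univ.erase i, (MvPolynomial.X i - MvPolynomial.X j)) *
        coeffPDeriv i (phi (R := R) m k) +
      m • (C (∏ l ∈ (Finset.univ.erase i).erase k, (MvPolynomial.X i - MvPolynomial.X l)) *
        (phi m i - phi m k)) = 0 := by
  rw [coeffPDeriv_phi_of_ne m hik.symm]
  rcases Nat.eq_zero_or_pos m with rfl | hm
  · simp
  rw [phi_sub_phi hm hik, psi_comm, prod_sub_X_eq_mul_prod_erase hik, map_mul]
  ring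

lemma kz_phi_self (m : ℕ) (i : σ) :
    C (∏ j ∈ Finset.univ.erase i, (MvPolynomial.X i - MvPolynomial.X j)) *
        coeffPDeriv i (phi (R := R) m i) +
      m • ∑ j ∈ Finset.univ.erase i,
        C (∏ l ∈ (Finset.univ.erase i).erase j, (MvPolynomial.X i - MvPolynomial.X l)) *
          (phi m j - phi m i) =
      -(C (∏ j ∈ Finset.univ.erase i, (MvPolynomial.X i - MvPolynomial.X j)) *
        derivative (phi m i)) := by
  rw [coeffPDeriv_phi_self]
  rcases Nat.eq_zero_or_pos m with rfl | hm
  · simp only [zero_smul, add_zero]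
    ring
  have hterm : ∀ j ∈ Finset.univ.erase i,
      C (∏ l ∈ (Finset.univ.erase i).erase j, (MvPolynomial.X i - MvPolynomial.X l)) *
          (phi m j - phi m i) =
        -(C (∏ j ∈ Finset.univ.erase i, (MvPolynomial.X i - MvPolynomial.X j)) *
          psi (R := R) m i j) := by
    intro j hj
    have hij : i ≠ j := (Finset.ne_of_mem_erase hj).symm
    rw [phi_sub_phi hm hij.symm, psi_comm, prod_sub_X_eq_mul_prod_erase hij, map_mul, map_sub,
      map_sub]
    ring
  rw [Finset.sum_congr rfl hterm, Finset.sum_neg_distrib, ← Finset.mul_sum]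
  ring

lemma smul_sum_coeff_phi (m N : ℕ) :
    m • ∑ k : σ, (phi (R := R) m k).coeff N =
      (∏ j : σ, linFactor (R := R) j ^ m).coeff (N + 1) * (N + 1) := by
  rw [← coeff_derivative, derivative_prod_linFactor_pow, coeff_smul, finsetSum_coeff]

end

lemma Om_mulVec_apply {n : ℕ} {i j : Fin n} (hij : i ≠ j) (v : Fin n → R) (k : Fin n) :
    (Om R i j).mulVec v k = if k = i then v j - v i else if k = j then v i - v j else 0 := by
  rw [Matrix.mulVec, dotProduct, Finset.sum_eq_add_of_mem i j (Finset.mem_univ i)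
    (Finset.mem_univ j) hij fun l _ hl ↦ by simp [Om, hl.1, hl.2]]
  split_ifs with hki hkj <;> simp [Om, hij.symm, *] <;> ring

variable {n : ℕ}

lemma kz_coeff_phi (m N : ℕ) (i k : Fin n) :
    (∏ j ∈ Finset.univ.erase i, (MvPolynomial.X i - MvPolynomial.X j)) *
        pderiv i ((phi (R := R) m k).coeff N) +
      m • ∑ j ∈ Finset.univ.erase i,
        (∏ l ∈ (Finset.univ.erase i).erase j, (MvPolynomial.X i - MvPolynomial.X l)) *
          (Om (MvPolynomial (Fin n) R) i j).mulVec (fun l ↦ (phi m l).coeff N) k =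
      if k = i then
        -((∏ j ∈ Finset.univ.erase i, (MvPolynomial.X i - MvPolynomial.X j)) *
          ((phi m i).coeff (N + 1) * (N + 1)))
      else 0 := by
  split_ifs with hki
  · subst hki
    have h := congrArg (coeff · N) (kz_phi_self (R := R) m k)
    simp only [coeff_add, coeff_C_mul, coeff_smul, finsetSum_coeff, coeff_sub,
      coeff_coeffPDeriv, coeff_neg, coeff_derivative] at h
    rw [← h, Finset.sum_congr rfl fun j hj ↦ by
      rw [Om_mulVec_apply (Finset.ne_of_mem_erase hj).symm, if_pos rfl]]
  · have hk : k ∈ Finset.univ.erase i := Finset.mem_erase.2 ⟨hki, Finset.mem_univ k⟩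
    have h := congrArg (coeff · N) (kz_phi_of_ne (R := R) m (Ne.symm hki))
    simp only [coeff_add, coeff_C_mul, coeff_smul, coeff_sub, coeff_coeffPDeriv,
      coeff_zero] at h
    rw [← h, Finset.sum_eq_single_of_mem k hk fun j hj hjk ↦ by
      rw [Om_mulVec_apply (Finset.ne_of_mem_erase hj).symm, if_neg hki, if_neg hjk.symm,
        mul_zero], Om_mulVec_apply (Ne.symm hki), if_neg hki, if_pos rfl]

end KZ

theorem ps_hypergeometric_solutions_general (p s g : ℕ) (hodd : Odd p) (ℓ : ℕ) (hℓ1 : 1 ≤ ℓ) :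
    (∀ i k : Fin (2 * g + 1),
      ((p : MvPolynomial (Fin (2 * g + 1)) ℤ)) ^ s ∣
        (∏ j ∈ Finset.univ.erase i, (MvPolynomial.X i - MvPolynomial.X j)) *
            MvPolynomial.pderiv i
              ((masterQuot p s (2 * g + 1) k).coeff (ℓ * p ^ s - 1)) +
          ((p ^ s - 1) / 2) •
            ∑ j ∈ Finset.univ.erase i,
              (∏ l ∈ (Finset.univ.erase i).erase j,
                  (MvPolynomial.X i - MvPolynomial.X l)) *
                ((Om (MvPolynomial (Fin (2 * g + 1)) ℤ) i j).mulVec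
                  (fun m => (masterQuot p s (2 * g + 1) m).coeff (ℓ * p ^ s - 1)) k)) ∧
    ((p : MvPolynomial (Fin (2 * g + 1)) ℤ)) ^ s ∣
      ∑ k : Fin (2 * g + 1), (masterQuot p s (2 * g + 1) k).coeff (ℓ * p ^ s - 1) := by
  have hN : ((ℓ * p ^ s - 1 : ℕ) : MvPolynomial (Fin (2 * g + 1)) ℤ) + 1 = ℓ * (p : _) ^ s := by
    have hpos : 1 ≤ ℓ * p ^ s := Nat.mul_pos hℓ1 (pow_pos hodd.pos s)
    exact_mod_cast Nat.sub_add_cancel hpos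
  have hquot : masterQuot p s (2 * g + 1) = KZ.phi ((p ^ s - 1) / 2) := rfl
  rw [hquot]
  refine ⟨fun i k ↦ ?_, ?_⟩
  · rw [KZ.kz_coeff_phi, hN]
    split_ifs
    · exact (dvd_neg.2 (dvd_mul_of_dvd_right (dvd_mul_of_dvd_right (dvd_mul_left _ _) _) _))
    · exact dvd_zero _
  · have h2m : 2 * ((p ^ s - 1) / 2) + 1 = p ^ s := by
      have := Nat.two_mul_div_two_add_one_of_odd (hodd.pow : Odd (p ^ s))
      omega
    have hps : (p : MvPolynomial (Fin (2 * g + 1)) ℤ) ^ s = 2 * ((p ^ s - 1) / 2 : ℕ) + 1 := by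
      exact_mod_cast h2m.symm
    have hcop : IsCoprime ((p : MvPolynomial (Fin (2 * g + 1)) ℤ) ^ s) ((p ^ s - 1) / 2 : ℕ) :=
      ⟨1, -2, by rw [hps]; ring⟩
    refine hcop.dvd_of_dvd_mul_left ?_
    rw [← nsmul_eq_mul, KZ.smul_sum_coeff_phi, hN]
    exact dvd_mul_of_dvd_right (dvd_mul_left _ _) _

/-- for `ℓ = 1,…,g` the vector `I_{s,ℓ}` of coefficients of
`t^(ℓp^s - 1)` in `(Φ_s/(t-z_1), …, Φ_s/(t-z_n))` is a polynomial solution modulo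
`p^s` of the KZ system: after clearing the denominators `z_i - z_j`, one has
`∏_{j≠i}(z_i-z_j) · ∂I/∂z_i ≡ -((p^s-1)/2)·Σ_{j≠i} ∏_{l≠i,j}(z_i-z_l) · Ω_{ij}I
(mod p^s)` for every `i`, and `I_{s,ℓ,1} + ⋯ + I_{s,ℓ,n} ≡ 0 (mod p^s)`. -/
theorem ps_hypergeometric_solutions (p s g : ℕ) (hp : p.Prime) (hodd : Odd p)
    (hs : 1 ≤ s) (ℓ : ℕ) (hℓ1 : 1 ≤ ℓ) (hℓg : ℓ ≤ g) :
    (∀ i k : Fin (2 * g + 1),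
      ((p : MvPolynomial (Fin (2 * g + 1)) ℤ)) ^ s ∣
        (∏ j ∈ Finset.univ.erase i, (MvPolynomial.X i - MvPolynomial.X j)) *
            MvPolynomial.pderiv i
              ((masterQuot p s (2 * g + 1) k).coeff (ℓ * p ^ s - 1)) +
          ((p ^ s - 1) / 2) •
            ∑ j ∈ Finset.univ.erase i,
              (∏ l ∈ (Finset.univ.erase i).erase j,
                  (MvPolynomial.X i - MvPolynomial.X l)) *
                ((Om (MvPolynomial (Fin (2 * g + 1)) ℤ) i j).mulVec
                  (fun m => (masterQuot p s (2 * g + 1) m).coeff (ℓ * p ^ s - 1)) k)) ∧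
    ((p : MvPolynomial (Fin (2 * g + 1)) ℤ)) ^ s ∣
      ∑ k : Fin (2 * g + 1), (masterQuot p s (2 * g + 1) k).coeff (ℓ * p ^ s - 1) :=
  ps_hypergeometric_solutions_general p s g hodd ℓ hℓ1
end

section
/- Let p be an odd prime with p > 2g+1, F(t,z) = ((t-z_1)···(t-z_{2g+1}))^((p-1)/2), Δ = {1,...,g}, and A(1,F) = (Cf_{pv-u}F)_{u,v=1,...,g} the Hasse–Witt matrix, where Cf_k extracts the coefficient of t^k. Then the polynomial det A(1, F(t,z)) ∈ ℤ[z_1,...,z_{2g+1}] is nonzero modulo p. -/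
/-!
Let `h = (p - 1) / 2` and `z^M = ∏_{v=1}^g (z_1 ⋯ z_{2g+1-2v})^h`, the lex-leading monomial of the
diagonal product; its coefficient in `det A = ∑_τ sign τ ∏_u A_{τ u, u}` is `±1`.
A contribution to it is a permutation `τ` with a splitting `M = ∑_u k_u`, where `k_u ≤ h`
coordinatewise and, as the exponent of a monomial of `Cf_{p u - τ u} F`, `k_u` has degree
`h L_u + τ u - u` with `L_u = 2g + 1 - 2u`. The staircase `S` whose row `u` is `h` on the first
`L_u` coordinates has the same column sums as `k`, so `∑_{u,i} (i - L_u) (k_{u,i} - S_{u,i})`,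
which is termwise nonnegative, equals `-∑_u L_u (τ u - u) = -∑_u (τ u - u)²`. Hence `τ = 1` and
`k = S`, and the surviving term is `±∏ binom(h, h) binom(h, 0) = ±1`.
-/

open Polynomial

/-- `F(t,z) = ((t-z_1)⋯(t-z_{2g+1}))^((p-1)/2)` as a polynomial in `t` over
`ℤ[z_1,…,z_{2g+1}]`. -/
noncomputable def masterF (p g : ℕ) : Polynomial (MvPolynomial (Fin (2 * g + 1)) ℤ) :=
  (∏ i : Fin (2 * g + 1), (X - C (MvPolynomial.X i))) ^ ((p - 1) / 2)

/-- The Hasse–Witt matrix `A(1,F) = (Cf_{pv-u} F)_{u,v ∈ {1,…,g}}`, where `Cf_k`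
extracts the coefficient of `t^k`. -/
noncomputable def hasseWittF (p g : ℕ) :
    Matrix (Fin g) (Fin g) (MvPolynomial (Fin (2 * g + 1)) ℤ) :=
  fun u v => (masterF p g).coeff (p * ((v : ℕ) + 1) - ((u : ℕ) + 1))

open Finset

namespace Polynomial

theorem coeff_prod_eq_sum_finsuppAntidiag {R ι : Type*} [CommSemiring R] [DecidableEq ι]
    (f : ι → R[X]) (d : ℕ) (s : Finset ι) :
    (∏ j ∈ s, f j).coeff d = ∑ l ∈ finsuppAntidiag s d, ∏ i ∈ s, (f i).coeff (l i) := by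
  rw [← coeff_coe, ← coeToPowerSeries.ringHom_apply, map_prod, PowerSeries.coeff_prod]
  simp only [coeToPowerSeries.ringHom_apply, coeff_coe]

theorem coeff_X_sub_C_pow {R : Type*} [CommRing R] (r : R) (n k : ℕ) :
    ((X - C r) ^ n).coeff k = (-r) ^ (n - k) * (n.choose k : R) := by
  rw [sub_eq_add_neg, ← C_neg, coeff_X_add_C_pow]

end Polynomial

namespace MvPolynomial

theorem coeff_prod_eq_sum_finsuppAntidiag {R σ ι : Type*} [CommSemiring R] [DecidableEq σ]
    [DecidableEq ι] (f : ι → MvPolynomial σ R) (d : σ →₀ ℕ) (s : Finset ι) :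
    coeff d (∏ j ∈ s, f j) = ∑ l ∈ finsuppAntidiag s d, ∏ i ∈ s, coeff (l i) (f i) := by
  rw [← coeff_coe, ← coeToMvPowerSeries.ringHom_apply, map_prod, MvPowerSeries.coeff_prod]
  simp only [coeToMvPowerSeries.ringHom_apply, coeff_coe]

theorem coeff_det {ι σ R : Type*} [Fintype ι] [DecidableEq ι] [DecidableEq σ] [CommRing R]
    (A : Matrix ι ι (MvPolynomial σ R)) (m : σ →₀ ℕ) :
    coeff m A.det = ∑ τ : Equiv.Perm ι, Equiv.Perm.sign τ •
      ∑ k ∈ finsuppAntidiag univ m, ∏ u, coeff (k u) (A (τ u) u) := by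
  simp only [Matrix.det_apply, coeff_sum, coeff_smul, coeff_prod_eq_sum_finsuppAntidiag]

end MvPolynomial

noncomputable def prodXSubXPow (n h : ℕ) : (MvPolynomial (Fin n) ℤ)[X] :=
  (∏ i : Fin n, (X - C (MvPolynomial.X i))) ^ h

section Entries

variable {n : ℕ}

theorem coeff_prodXSubXPow (h N : ℕ) :
    (prodXSubXPow n h).coeff N =
      ∑ l ∈ finsuppAntidiag univ N, MvPolynomial.monomial (∑ i, Finsupp.single i (h - l i))
        (∏ i, (-1) ^ (h - l i) * (h.choose (l i) : ℤ)) := by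
  rw [prodXSubXPow, ← prod_pow, coeff_prod_eq_sum_finsuppAntidiag]
  refine sum_congr rfl fun l _ => ?_
  simp only [coeff_X_sub_C_pow, MvPolynomial.monomial_sum_index]
  rw [map_prod, ← prod_mul_distrib]
  refine prod_congr rfl fun i _ => ?_
  rw [← MvPolynomial.X_pow_eq_monomial, neg_pow]
  simp only [map_mul, map_pow, map_neg, map_one, map_natCast]
  ring

theorem add_eq_of_coeff_monomial_ne_zero {h : ℕ} {l m : Fin n →₀ ℕ}
    (hne : MvPolynomial.coeff m (MvPolynomial.monomial (∑ i, Finsupp.single i (h - l i))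
      (∏ i, (-1) ^ (h - l i) * (h.choose (l i) : ℤ))) ≠ 0) (i : Fin n) :
    l i + m i = h := by
  rw [MvPolynomial.coeff_monomial, ite_ne_right_iff, prod_ne_zero_iff] at hne
  obtain ⟨he, hc⟩ := hne
  have hli : l i ≤ h := by
    by_contra! hlt
    exact hc i (mem_univ i) (by simp [Nat.choose_eq_zero_of_lt hlt])
  have hmi : m i = h - l i := by
    simp only [← he, Finsupp.finsetSum_apply, Finsupp.single_apply, sum_ite_eq', mem_univ,
      if_true]
  omega

theorem le_and_sum_add_eq_of_coeff_coeff_prodXSubXPow_ne_zero {h N : ℕ} {m : Fin n →₀ ℕ}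
    (hm : MvPolynomial.coeff m ((prodXSubXPow n h).coeff N) ≠ 0) :
    (∀ i, m i ≤ h) ∧ ∑ i, m i + N = n * h := by
  rw [coeff_prodXSubXPow, MvPolynomial.coeff_sum] at hm
  obtain ⟨l, hl, hne⟩ := exists_ne_zero_of_sum_ne_zero hm
  have hlm := add_eq_of_coeff_monomial_ne_zero hne
  rw [mem_finsuppAntidiag] at hl
  refine ⟨fun i => hlm i ▸ Nat.le_add_left _ _, ?_⟩
  calc ∑ i, m i + N = ∑ i, (l i + m i) := by rw [← hl.1, sum_add_distrib, add_comm]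
    _ = n * h := by simp [hlm]

theorem coeff_coeff_prodXSubXPow {h N : ℕ} {m : Fin n →₀ ℕ} (hm : ∀ i, m i ≤ h)
    (hN : ∑ i, m i + N = n * h) :
    MvPolynomial.coeff m ((prodXSubXPow n h).coeff N) =
      ∏ i, (-1) ^ m i * (h.choose (m i) : ℤ) := by
  set l₀ : Fin n →₀ ℕ := Finsupp.equivFunOnFinite.symm fun i => h - m i
  have hl₀ : l₀ ∈ finsuppAntidiag univ N := by
    have hsum : ∑ i, l₀ i + ∑ i, m i = n * h := by
      simp [l₀, ← sum_add_distrib, Nat.sub_add_cancel (hm _)]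
    rw [mem_finsuppAntidiag]
    exact ⟨by change ∑ i, l₀ i = N; omega, subset_univ _⟩
  rw [coeff_prodXSubXPow, MvPolynomial.coeff_sum, sum_eq_single_of_mem l₀ hl₀]
  · have he : ∑ i, Finsupp.single i (h - l₀ i) = m := by
      ext j
      simp only [Finsupp.finsetSum_apply, Finsupp.single_apply, sum_ite_eq', mem_univ, if_true]
      simp [l₀, Nat.sub_sub_self (hm j)]
    rw [he, MvPolynomial.coeff_monomial, if_pos rfl]
    refine prod_congr rfl fun i _ => ?_
    simp [l₀, Nat.sub_sub_self (hm i), Nat.choose_symm (hm i)]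
  · intro l _ hl
    by_contra hne
    exact hl (Finsupp.ext fun i => by
      simp [l₀, ← add_eq_of_coeff_monomial_ne_zero hne i])

end Entries

section Staircase

variable {ι : Type*} {n : ℕ}

noncomputable def staircase (h : ℕ) (L : ι → ℕ) (u : ι) : Fin n →₀ ℕ :=
  Finsupp.equivFunOnFinite.symm fun i => if (i : ℕ) < L u then h else 0

@[simp]
theorem staircase_apply (h : ℕ) (L : ι → ℕ) (u : ι) (i : Fin n) :
    staircase h L u i = if (i : ℕ) < L u then h else 0 :=
  rfl

theorem sum_staircase (h : ℕ) (L : ι → ℕ) (u : ι) (hL : L u ≤ n) :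
    ∑ i : Fin n, staircase h L u i = h * L u := by
  simp [sum_ite, Fin.card_filter_val_lt, hL, mul_comm]

variable {h : ℕ} {L : ι → ℕ} {k : ι → Fin n →₀ ℕ}

theorem sub_mul_sub_staircase_nonneg {u : ι} {i : Fin n} (hki : k u i ≤ h) :
    0 ≤ (((i : ℕ) : ℤ) - L u) * ((k u i : ℤ) - staircase h L u i) := by
  rw [staircase_apply]
  split_ifs with hi
  · exact mul_nonneg_of_nonpos_of_nonpos (by omega) (by omega)
  · exact mul_nonneg (by omega) (by omega)

variable [Fintype ι]

theorem sum_sum_sub_mul_sub_staircase (hcol : ∀ i, ∑ u, k u i = ∑ u, staircase h L u i) :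
    ∑ u, ∑ i : Fin n, (((i : ℕ) : ℤ) - L u) * ((k u i : ℤ) - staircase h L u i) =
      -∑ u, (L u : ℤ) * ∑ i : Fin n, ((k u i : ℤ) - staircase h L u i) := by
  have hcol' : ∀ i, ∑ u, ((k u i : ℤ) - staircase h L u i) = 0 := fun i => by
    rw [sum_sub_distrib, sub_eq_zero]
    exact_mod_cast hcol i
  have hfirst : ∑ u, ∑ i : Fin n, ((i : ℕ) : ℤ) * ((k u i : ℤ) - staircase h L u i) = 0 := by
    rw [sum_comm]
    exact sum_eq_zero fun i _ => by rw [← mul_sum, hcol', mul_zero]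
  calc _ = ∑ u, ∑ i : Fin n, ((i : ℕ) : ℤ) * ((k u i : ℤ) - staircase h L u i) -
        ∑ u, (L u : ℤ) * ∑ i : Fin n, ((k u i : ℤ) - staircase h L u i) := by
        rw [← sum_sub_distrib]
        refine sum_congr rfl fun u _ => ?_
        rw [mul_sum, ← sum_sub_distrib]
        exact sum_congr rfl fun i _ => by ring
    _ = _ := by rw [hfirst, zero_sub]

theorem sum_mul_sum_sub_staircase_nonpos (hk : ∀ u i, k u i ≤ h)
    (hcol : ∀ i, ∑ u, k u i = ∑ u, staircase h L u i) :
    ∑ u, (L u : ℤ) * ∑ i : Fin n, ((k u i : ℤ) - staircase h L u i) ≤ 0 := by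
  have := sum_nonneg fun u (_ : u ∈ univ) =>
    sum_nonneg fun i (_ : i ∈ univ) => sub_mul_sub_staircase_nonneg (L := L) (hk u i)
  rw [sum_sum_sub_mul_sub_staircase hcol] at this
  linarith

theorem eq_staircase (hk : ∀ u i, k u i ≤ h) (hcol : ∀ i, ∑ u, k u i = ∑ u, staircase h L u i)
    (hrow : ∀ u, ∑ i, k u i = ∑ i : Fin n, staircase h L u i) : k = staircase h L := by
  have hrow' : ∀ u, ∑ i : Fin n, ((k u i : ℤ) - staircase h L u i) = 0 := fun u => by
    rw [sum_sub_distrib, sub_eq_zero]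
    exact_mod_cast hrow u
  have hterm : ∀ u (i : Fin n),
      (((i : ℕ) : ℤ) - L u) * ((k u i : ℤ) - staircase h L u i) = 0 := by
    have htotal := sum_sum_sub_mul_sub_staircase hcol
    simp only [hrow', mul_zero, sum_const_zero, neg_zero] at htotal
    intro u i
    rw [sum_eq_zero_iff_of_nonneg fun u _ => sum_nonneg fun i _ =>
      sub_mul_sub_staircase_nonneg (L := L) (hk u i)] at htotal
    exact (sum_eq_zero_iff_of_nonneg fun i _ => sub_mul_sub_staircase_nonneg (L := L) (hk u i)).1
      (htotal u (mem_univ u)) i (mem_univ i)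
  have hoff : ∀ u (i : Fin n), (i : ℕ) ≠ L u → (k u i : ℤ) = staircase h L u i := fun u i hi =>
    sub_eq_zero.1 ((mul_eq_zero.1 (hterm u i)).resolve_left (by omega))
  funext u
  ext i
  by_cases hi : (i : ℕ) = L u
  · have := hrow' u
    rw [sum_eq_single i fun j _ hj => sub_eq_zero.2 (hoff u j (by omega)), sub_eq_zero] at this
    · exact_mod_cast this
    · simp
  · exact_mod_cast hoff u i hi

end Staircase

theorem Equiv.Perm.sum_mul_sub_eq_sum_sq {R ι : Type*} [CommRing R] [Fintype ι]
    (τ : Equiv.Perm ι) (f : ι → R) (c : R) :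
    ∑ u, (c - 2 * f u) * (f (τ u) - f u) = ∑ u, (f (τ u) - f u) ^ 2 := by
  have h1 : ∑ u, f (τ u) = ∑ u, f u := Equiv.sum_comp τ f
  have h2 : ∑ u, f (τ u) ^ 2 = ∑ u, f u ^ 2 := Equiv.sum_comp τ (f · ^ 2)
  have e1 : ∑ u, (c - 2 * f u) * (f (τ u) - f u) =
      c * (∑ u, f (τ u) - ∑ u, f u) - 2 * ∑ u, f u * f (τ u) + 2 * ∑ u, f u ^ 2 := by
    simp only [mul_sum, ← sum_sub_distrib, ← sum_add_distrib]
    exact sum_congr rfl fun u _ => by ring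
  have e2 : ∑ u, (f (τ u) - f u) ^ 2 =
      ∑ u, f (τ u) ^ 2 - 2 * ∑ u, f u * f (τ u) + ∑ u, f u ^ 2 := by
    simp only [mul_sum, ← sum_sub_distrib, ← sum_add_distrib]
    exact sum_congr rfl fun u _ => by ring
  rw [e1, e2, h1, h2]
  ring

/-- `z ^ leadExponent g h u = (z_0 ⋯ z_{2(g-u)-2})^h`, the paper's `(z_1 ⋯ z_{2g+1-2v})^h` with
`v = u + 1`. -/
noncomputable def leadExponent (g h : ℕ) : Fin g → Fin (2 * g + 1) →₀ ℕ :=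
  staircase h fun u => 2 * (g - u) - 1

section HasseWitt

variable {g h : ℕ}

theorem eq_one_and_eq_leadExponent (τ : Equiv.Perm (Fin g)) (k : Fin g → Fin (2 * g + 1) →₀ ℕ)
    (hk : ∀ u i, k u i ≤ h) (hcol : ∀ i, ∑ u, k u i = ∑ u, leadExponent g h u i)
    (hrow : ∀ u, ∑ i, (k u i : ℤ) = ∑ i, (leadExponent g h u i : ℤ) + ((τ u : ℕ) - (u : ℕ))) :
    τ = 1 ∧ k = leadExponent g h := by
  have hsq : ∑ u : Fin g, (((τ u : ℕ) : ℤ) - (u : ℕ)) ^ 2 ≤ 0 := calc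
    _ = ∑ u : Fin g, ((2 * g - 1 : ℤ) - 2 * (u : ℕ)) * (((τ u : ℕ) : ℤ) - (u : ℕ)) :=
      (Equiv.Perm.sum_mul_sub_eq_sum_sq τ _ _).symm
    _ = ∑ u : Fin g,
          ((2 * (g - u) - 1 : ℕ) : ℤ) * ∑ i, ((k u i : ℤ) - leadExponent g h u i) := by
      refine sum_congr rfl fun u _ => ?_
      rw [sum_sub_distrib, hrow u, add_sub_cancel_left]
      congr 1
      omega
    _ ≤ 0 := sum_mul_sum_sub_staircase_nonpos hk hcol
  have hτ : τ = 1 := Equiv.ext fun u => Fin.ext <| by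
    have := (sum_eq_zero_iff_of_nonneg fun u _ => sq_nonneg _).1
      (le_antisymm hsq (sum_nonneg fun u _ => sq_nonneg _)) u (mem_univ u)
    simpa [sub_eq_zero] using this
  subst hτ
  refine ⟨rfl, eq_staircase hk hcol fun u => ?_⟩
  have := hrow u
  simp only [Equiv.Perm.coe_one, id_eq, sub_self, add_zero] at this
  exact_mod_cast this

theorem hasseWittF_apply (u v : Fin g) :
    hasseWittF (2 * h + 1) g u v =
      (prodXSubXPow (2 * g + 1) h).coeff ((2 * h + 1) * ((v : ℕ) + 1) - ((u : ℕ) + 1)) := by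
  simp [hasseWittF, masterF, prodXSubXPow]

-- `g ≤ p` keeps the truncated subtraction in the index `p (u + 1) - (v + 1)` exact.
theorem hasseWitt_degree_iff (hg : g ≤ 2 * h + 1) (u v : Fin g) (d : ℕ) :
    d + ((2 * h + 1) * ((u : ℕ) + 1) - ((v : ℕ) + 1)) = (2 * g + 1) * h ↔
      (d : ℤ) = ∑ i, (leadExponent g h u i : ℤ) + ((v : ℕ) - (u : ℕ)) := by
  have hrow : h * (2 * (g - u) - 1) + 2 * (h * u) + 2 * h = (2 * g + 1) * h := by
    obtain ⟨e, he⟩ : ∃ e, g = u + 1 + e := ⟨g - u - 1, by omega⟩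
    rw [show 2 * (g - u) - 1 = 2 * e + 1 by omega, show 2 * g + 1 = 2 * (u + 1 + e) + 1 by omega]
    ring
  have hcol : (2 * h + 1) * ((u : ℕ) + 1) = 2 * (h * u) + 2 * h + u + 1 := by ring
  rw [← Nat.cast_sum, leadExponent, sum_staircase h _ u (by omega), hcol, ← hrow]
  omega

theorem le_and_sum_eq_of_coeff_hasseWittF_ne_zero (hg : g ≤ 2 * h + 1) {u v : Fin g}
    {m : Fin (2 * g + 1) →₀ ℕ} (hm : MvPolynomial.coeff m (hasseWittF (2 * h + 1) g v u) ≠ 0) :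
    (∀ i, m i ≤ h) ∧
      ∑ i, (m i : ℤ) = ∑ i, (leadExponent g h u i : ℤ) + ((v : ℕ) - (u : ℕ)) := by
  rw [hasseWittF_apply] at hm
  obtain ⟨hle, hdeg⟩ := le_and_sum_add_eq_of_coeff_coeff_prodXSubXPow_ne_zero hm
  refine ⟨hle, ?_⟩
  exact_mod_cast (hasseWitt_degree_iff hg u v _).1 hdeg

theorem isUnit_coeff_leadExponent_hasseWittF (hg : g ≤ 2 * h + 1) (u : Fin g) :
    IsUnit (MvPolynomial.coeff (leadExponent g h u) (hasseWittF (2 * h + 1) g u u)) := by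
  rw [hasseWittF_apply, coeff_coeff_prodXSubXPow]
  · refine IsUnit.prod_univ_iff.2 fun i => ?_
    simp only [leadExponent, staircase_apply]
    split_ifs
    · simpa using (isUnit_neg_one (α := ℤ)).pow h
    · simp
  · intro i
    simp only [leadExponent, staircase_apply]
    split_ifs <;> omega
  · exact (hasseWitt_degree_iff hg u u _).2 (by push_cast; ring)

theorem eq_one_and_eq_of_prod_coeff_hasseWittF_ne_zero (hg : g ≤ 2 * h + 1)
    {τ : Equiv.Perm (Fin g)} {k : Fin g →₀ Fin (2 * g + 1) →₀ ℕ}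
    (hk : k ∈ finsuppAntidiag univ (∑ u, leadExponent g h u))
    (hne : ∏ u, MvPolynomial.coeff (k u) (hasseWittF (2 * h + 1) g (τ u) u) ≠ 0) :
    τ = 1 ∧ ⇑k = leadExponent g h := by
  have hentry u := le_and_sum_eq_of_coeff_hasseWittF_ne_zero hg
    (prod_ne_zero_iff.1 hne u (mem_univ u))
  refine eq_one_and_eq_leadExponent τ k (fun u => (hentry u).1) (fun i => ?_)
    (fun u => (hentry u).2)
  have := congrArg (· i) (mem_finsuppAntidiag.1 hk).1
  simpa [Finsupp.finsetSum_apply] using this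

theorem isUnit_coeff_det_hasseWittF (hg : g ≤ 2 * h + 1) :
    IsUnit (MvPolynomial.coeff (∑ u, leadExponent g h u) (hasseWittF (2 * h + 1) g).det) := by
  set K : Fin g →₀ Fin (2 * g + 1) →₀ ℕ := Finsupp.equivFunOnFinite.symm (leadExponent g h)
  have hK : K ∈ finsuppAntidiag univ (∑ u, leadExponent g h u) :=
    mem_finsuppAntidiag.2 ⟨rfl, subset_univ _⟩
  rw [MvPolynomial.coeff_det, sum_eq_single 1, sum_eq_single_of_mem K hK]
  · simpa [K] using IsUnit.prod_univ_iff.2 (isUnit_coeff_leadExponent_hasseWittF hg)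
  · intro k hk hkK
    by_contra hne
    exact hkK <| DFunLike.coe_injective <|
      (eq_one_and_eq_of_prod_coeff_hasseWittF_ne_zero hg hk hne).2
  · intro τ _ hτ
    rw [sum_eq_zero fun k hk => ?_, smul_zero]
    by_contra hne
    exact hτ (eq_one_and_eq_of_prod_coeff_hasseWittF_ne_zero hg hk hne).1
  · simp

end HasseWitt

theorem hasseWitt_det_nonzero_mod_p_general (p g : ℕ) (hodd : Odd p)
    (hpg : 2 * g + 1 < p) :
    ∃ m : Fin (2 * g + 1) →₀ ℕ,
      ¬ (p : ℤ) ∣ MvPolynomial.coeff m (hasseWittF p g).det := by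
  obtain ⟨h, rfl⟩ := hodd
  refine ⟨∑ u, leadExponent g h u, fun hdvd => ?_⟩
  have := Int.isUnit_iff.1 (isUnit_of_dvd_unit hdvd (isUnit_coeff_det_hasseWittF (by omega)))
  omega

/-- for an odd prime `p > 2g+1`, the polynomial `det A(1, F(t,z))` is
nonzero modulo `p`: some coefficient of the determinant is not divisible by `p`. -/
theorem hasseWitt_det_nonzero_mod_p (p g : ℕ) (hp : p.Prime) (hodd : Odd p)
    (hpg : 2 * g + 1 < p) :
    ∃ m : Fin (2 * g + 1) →₀ ℕ,
      ¬ (p : ℤ) ∣ MvPolynomial.coeff m (hasseWittF p g).det :=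
  hasseWitt_det_nonzero_mod_p_general p g hodd hpg
end
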